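/- arXiv:2504.10990 — 5 statements merged into one kernel-verified Lean document; each statement's English description precedes it below -/
import Mathlib

section
/- Let d ≥ 1, α > 0 and p ≥ 1, and let f : ℝ^d → ℝ be continuous and satisfy Assumption (A). Then there exists a constant C_m > 0, depending only on p, c_ℓ, c_u, c_0, ℓ and α, such that for every Borel probability measure μ on ℝ^d with ∫_{ℝ^d} |x|^p dμ(x) < ∞ one has |m_α^f(μ)|^p ≤ C_m ∫_{ℝ^d} |x|^p dμ(x). -/
open MeasureTheory Real Filter
open scoped ENNReal RealInnerProductSpace

noncomputable section

abbrev Euc (d : ℕ) := EuclideanSpace ℝ (Fin d)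

/-- Assumption (A) on the objective function. -/
def AssumptionA {d : ℕ} (f : Euc d → ℝ) (Lf s cl cu c0 l : ℝ) : Prop :=
  Continuous f ∧ BddBelow (Set.range f) ∧ 0 < Lf ∧ 0 ≤ s ∧
  (∀ x y : Euc d, |f x - f y| ≤ Lf * (1 + ‖x‖ + ‖y‖) ^ s * ‖x - y‖) ∧
  0 < cl ∧ 0 < cu ∧ 0 < c0 ∧ 0 < l ∧
  (∀ x : Euc d, cl * (‖x‖ ^ l - c0) ≤ f x - sInf (Set.range f)) ∧
  (∀ x : Euc d, f x - sInf (Set.range f) ≤ cu * (‖x‖ ^ l + 1))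

/-- Consensus point of a probability measure. -/
def mConsensus {d : ℕ} (α : ℝ) (f : Euc d → ℝ) (μ : Measure (Euc d)) : Euc d :=
  (∫ x, Real.exp (-α * f x) ∂μ)⁻¹ • ∫ x, Real.exp (-α * f x) • x ∂μ

/-- Consensus point of a density. -/
def mDensity {d : ℕ} (α : ℝ) (f : Euc d → ℝ) (ρ : Euc d → ℝ) : Euc d :=
  (∫ x, Real.exp (-α * f x) * ρ x)⁻¹ • ∫ x, (Real.exp (-α * f x) * ρ x) • x

/-- Partial derivative in the i-th coordinate direction. -/
def pd {d : ℕ} (g : Euc d → ℝ) (i : Fin d) (x : Euc d) : ℝ :=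
  fderiv ℝ g x (EuclideanSpace.single i 1)

/-- Laplacian. -/
def lap {d : ℕ} (g : Euc d → ℝ) (x : Euc d) : ℝ := ∑ i, pd (fun y => pd g i y) i x

/-- Divergence of a vector field. -/
def divg {d : ℕ} (v : Euc d → Euc d) (x : Euc d) : ℝ := ∑ i, pd (fun y => v y i) i x

/-- Cutoff function. -/
def IsCutoff (φ : ℝ → ℝ) (Cφ : ℝ) : Prop :=
  ContDiff ℝ 2 φ ∧ (∀ v : ℝ, v ≤ 1 → φ v = 1) ∧ (∀ v : ℝ, 2 ≤ v → φ v = 0) ∧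
  (∀ v : ℝ, 0 ≤ φ v ∧ φ v ≤ 1) ∧ (∀ v : ℝ, |deriv φ v| ≤ Cφ) ∧
  (∀ v : ℝ, |deriv (deriv φ) v| ≤ Cφ)

/-- Polynomial decay of ρ, ∂ₜρ and spatial derivatives up to order 4, uniformly for t ∈ [0,T]. -/
def PolyDecay {d : ℕ} (T : ℝ) (ρ : ℝ → Euc d → ℝ) : Prop :=
  (∀ k : ℕ, k ≤ 4 → ∀ n : ℕ, ∃ C : ℝ, ∀ t ∈ Set.Icc (0:ℝ) T, ∀ x : Euc d,
      ‖x‖ ^ n * ‖iteratedFDeriv ℝ k (ρ t) x‖ ≤ C) ∧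
  (∀ n : ℕ, ∃ C : ℝ, ∀ t ∈ Set.Icc (0:ℝ) T, ∀ x : Euc d,
      ‖x‖ ^ n * |deriv (fun s => ρ s x) t| ≤ C)

/-- The cutoff drift field h(t,·) for the regularized equation. -/
def hfun {d : ℕ} (α : ℝ) (f : Euc d → ℝ) (φ : ℝ → ℝ) (R : ℝ) (ρ : Euc d → ℝ)
    (y : Euc d) : Euc d :=
  φ (‖y - mDensity α f ρ‖ / R) • (y - mDensity α f ρ)

/-- A probability density. -/
def IsProbDensity {d : ℕ} (ρ : Euc d → ℝ) : Prop :=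
  (∀ x, 0 ≤ ρ x) ∧ Integrable ρ ∧ ∫ x, ρ x = 1

/-- Classical solution of the regularized CBO Fokker–Planck equation. -/
def IsRegSolution {d : ℕ} (lam sig α T ε R : ℝ) (f : Euc d → ℝ) (φ : ℝ → ℝ)
    (ρ : ℝ → Euc d → ℝ) : Prop :=
  ContDiff ℝ (⊤ : ℕ∞) (fun q : ℝ × Euc d => ρ q.1 q.2) ∧
  PolyDecay T ρ ∧
  (∀ t ∈ Set.Icc (0:ℝ) T, IsProbDensity (ρ t)) ∧
  (∀ t ∈ Set.Icc (0:ℝ) T, ∀ x : Euc d,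
    deriv (fun s => ρ s x) t =
      lam * divg (fun y => ρ t y • hfun α f φ R (ρ t) y) x
      + sig ^ 2 / 2 * lap (fun y => (‖hfun α f φ R (ρ t) y‖ ^ 2 + ε ^ 2) * ρ t y) x)

/-- Classical solution of the CBO Fokker–Planck equation. -/
def IsCBOSolution {d : ℕ} (lam sig α T : ℝ) (f : Euc d → ℝ) (ρ : ℝ → Euc d → ℝ) : Prop :=
  ContDiff ℝ (⊤ : ℕ∞) (fun q : ℝ × Euc d => ρ q.1 q.2) ∧
  PolyDecay T ρ ∧
  (∀ t ∈ Set.Icc (0:ℝ) T, IsProbDensity (ρ t)) ∧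
  (∀ t ∈ Set.Icc (0:ℝ) T, ∀ x : Euc d,
    deriv (fun s => ρ s x) t =
      lam * divg (fun y => ρ t y • (y - mDensity α f (ρ t))) x
      + sig ^ 2 / 2 * lap (fun y => ‖y - mDensity α f (ρ t)‖ ^ 2 * ρ t y) x)



/-- Scalar core inequality used for the consensus point bound. -/
lemma scalar_core {p l cl cu c0 α : ℝ} (hp : 1 ≤ p) (hl : 0 < l) (hcl : 0 < cl) (hcu : 0 < cu)
    {C : ℝ} (hC1 : (cu / cl) ^ (p / l) ≤ C) (hC2 : Real.exp (α * cl * c0 + α * cu) + 1 ≤ C)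
    {u v wx wy : ℝ} (hu : 0 ≤ u) (hv : 0 ≤ v) (hvu : v ≤ u) (hwx : 0 < wx) (hwy : 0 < wy)
    (hbound : cu * v ^ l ≤ cl * u ^ l → wx ≤ Real.exp (α * cl * c0 + α * cu) * wy) :
    u ^ p * wx + v ^ p * wy ≤ C * (v ^ p * wx + u ^ p * wy) := by
  have hp0 : (0:ℝ) < p := lt_of_lt_of_le one_pos hp
  have hC1' : (1:ℝ) ≤ C := le_trans (by nlinarith [Real.exp_pos (α * cl * c0 + α * cu)]) hC2
  have hCpos : (0:ℝ) < C := lt_of_lt_of_le one_pos hC1'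
  have hvp : v ^ p ≤ u ^ p := Real.rpow_le_rpow hv hvu hp0.le
  have hupn : 0 ≤ u ^ p := Real.rpow_nonneg hu p
  have hvpn : 0 ≤ v ^ p := Real.rpow_nonneg hv p
  by_cases hcase : u ^ p ≤ C * v ^ p
  · have h1 : u ^ p * wx ≤ C * v ^ p * wx := mul_le_mul_of_nonneg_right hcase hwx.le
    have h2 : v ^ p * wy ≤ C * (u ^ p * wy) := by
      have h2a := mul_le_mul_of_nonneg_right hvp hwy.le
      have h2b := le_mul_of_one_le_left (mul_nonneg hupn hwy.le) hC1'
      linarith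
    nlinarith
  · push_neg at hcase
    have hA : cu * v ^ l ≤ cl * u ^ l := by
      have hpl : p * (l / p) = l := by field_simp
      have h1 : (C * v ^ p) ^ (l / p) ≤ (u ^ p) ^ (l / p) :=
        Real.rpow_le_rpow (by positivity) hcase.le (by positivity)
      have h2 : (u ^ p) ^ (l / p) = u ^ l := by
        rw [← Real.rpow_mul hu, hpl]
      have h3 : (C * v ^ p) ^ (l / p) = C ^ (l / p) * v ^ l := by
        rw [Real.mul_rpow hCpos.le (Real.rpow_nonneg hv p), ← Real.rpow_mul hv, hpl]
      have h4 : cu / cl ≤ C ^ (l / p) := by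
        calc cu / cl = ((cu / cl) ^ (p / l)) ^ (l / p) := by
              rw [← Real.rpow_mul (by positivity), show p / l * (l / p) = 1 by field_simp,
                Real.rpow_one]
          _ ≤ C ^ (l / p) := Real.rpow_le_rpow (by positivity) hC1 (by positivity)
      have h5 : C ^ (l / p) * v ^ l ≤ u ^ l := by
        rw [← h3, ← h2]; exact h1
      have h6 : cu / cl * v ^ l ≤ u ^ l :=
        le_trans (mul_le_mul_of_nonneg_right h4 (Real.rpow_nonneg hv l)) h5
      have h7 : cl * (cu / cl * v ^ l) ≤ cl * u ^ l := mul_le_mul_of_nonneg_left h6 hcl.le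
      have h8 : cl * (cu / cl * v ^ l) = cu * v ^ l := by field_simp
      linarith
    have hwxy : wx ≤ (C - 1) * wy := by
      have hb := hbound hA
      have h7 : Real.exp (α * cl * c0 + α * cu) ≤ C - 1 := by linarith
      nlinarith [mul_le_mul_of_nonneg_right h7 hwy.le]
    nlinarith [mul_le_mul_of_nonneg_left hwxy hupn, mul_le_mul_of_nonneg_right hvp hwy.le,
      mul_nonneg (mul_nonneg hCpos.le hvpn) hwx.le]

/-- Integrability with respect to a tilted measure, given a bounded tilt and a dominating
integrable bound. -/
lemma integrable_tilted_aux {d : ℕ} {μ : Measure (Euc d)} {h : Euc d → ℝ} (hh : Continuous h)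
    {Wc : ℝ} (hW : ∀ x, Real.exp (h x) ≤ Wc) {g b : Euc d → ℝ}
    (hg : AEStronglyMeasurable g μ) (hb : Integrable b μ) (hgb : ∀ x, |g x| ≤ b x) :
    Integrable g (μ.tilted h) := by
  set D := ∫ x, Real.exp (h x) ∂μ with hD
  have hDnn : 0 ≤ D := integral_nonneg fun x => (Real.exp_pos _).le
  have hdm : Measurable fun x => ENNReal.ofReal (Real.exp (h x) / D) :=
    ((Real.continuous_exp.comp hh).measurable.div_const D).ennreal_ofReal
  unfold Measure.tilted
  rw [integrable_withDensity_iff hdm (by filter_upwards with x using ENNReal.ofReal_lt_top)]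
  refine Integrable.mono' (hb.mul_const (Wc * |D⁻¹|))
    (hg.mul hdm.ennreal_toReal.aestronglyMeasurable) ?_
  filter_upwards with x
  have h1 : (ENNReal.ofReal (Real.exp (h x) / D)).toReal = Real.exp (h x) / D :=
    ENNReal.toReal_ofReal (div_nonneg (Real.exp_pos _).le hDnn)
  rw [Real.norm_eq_abs, abs_mul, h1]
  have h2 : |Real.exp (h x) / D| ≤ Wc * |D⁻¹| := by
    rw [div_eq_mul_inv, abs_mul, abs_of_pos (Real.exp_pos _)]
    exact mul_le_mul_of_nonneg_right (hW x) (abs_nonneg _)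
  have hbx : 0 ≤ b x := le_trans (abs_nonneg _) (hgb x)
  exact mul_le_mul (hgb x) h2 (abs_nonneg _) hbx

/-- boundedness of the consensus point, with constant depending only
on `p, cl, cu, c0, l, α`. -/
theorem stmt0 (d : ℕ) (hd : 1 ≤ d) (α p cl cu c0 l : ℝ)
    (hα : 0 < α) (hp : 1 ≤ p) (hcl : 0 < cl) (hcu : 0 < cu) (hc0 : 0 < c0) (hl : 0 < l) :
    ∃ C : ℝ, 0 < C ∧ ∀ (f : Euc d → ℝ) (Lf s : ℝ), AssumptionA f Lf s cl cu c0 l →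
      ∀ μ : Measure (Euc d), IsProbabilityMeasure μ →
        Integrable (fun x => ‖x‖ ^ p) μ →
        ‖mConsensus α f μ‖ ^ p ≤ C * ∫ x, ‖x‖ ^ p ∂μ := by
  classical
  refine ⟨max ((cu / cl) ^ (p / l)) (Real.exp (α * cl * c0 + α * cu) + 1),
    lt_of_lt_of_le (by positivity) (le_max_right _ _), ?_⟩
  set C : ℝ := max ((cu / cl) ^ (p / l)) (Real.exp (α * cl * c0 + α * cu) + 1) with hCdef
  have hCpos : 0 < C := lt_of_lt_of_le (by positivity) (le_max_right _ _)
  intro f Lf s hA μ hμ hM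
  haveI := hμ
  obtain ⟨hfc, hfb, -, -, -, -, -, -, -, hlow, hup⟩ := hA
  have hIle : ∀ x, sInf (Set.range f) ≤ f x := fun x => csInf_le hfb ⟨x, rfl⟩
  have hwpos : ∀ x : Euc d, 0 < Real.exp (-α * f x) := fun x => Real.exp_pos _
  have hwle : ∀ x : Euc d, Real.exp (-α * f x) ≤ Real.exp (-α * sInf (Set.range f)) :=
    fun x => Real.exp_le_exp.mpr (by nlinarith [hIle x])
  have hwc : Continuous fun x : Euc d => Real.exp (-α * f x) :=
    Real.continuous_exp.comp (continuous_const.mul hfc)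
  have hw : Integrable (fun x => Real.exp (-α * f x)) μ := by
    refine Integrable.mono' (integrable_const (Real.exp (-α * sInf (Set.range f))))
      hwc.aestronglyMeasurable ?_
    filter_upwards with x
    rw [Real.norm_eq_abs, abs_of_pos (hwpos x)]; exact hwle x
  set D := ∫ x, Real.exp (-α * f x) ∂μ with hD
  have hDpos : 0 < D := by
    rw [hD]
    refine (integral_pos_iff_support_of_nonneg (fun x => (hwpos x).le) hw).mpr ?_
    have hs : (Function.support fun x : Euc d => Real.exp (-α * f x)) = Set.univ :=
      Set.eq_univ_of_forall fun x => (hwpos x).ne'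
    rw [hs]
    simp
  set M := ∫ x, ‖x‖ ^ p ∂μ with hM0
  have hMnn : 0 ≤ M := integral_nonneg fun x => Real.rpow_nonneg (norm_nonneg x) p
  have hN : Integrable (fun x => ‖x‖ ^ p * Real.exp (-α * f x)) μ := by
    refine Integrable.mono' (hM.mul_const (Real.exp (-α * sInf (Set.range f))))
      (hM.aestronglyMeasurable.mul hwc.aestronglyMeasurable) ?_
    filter_upwards with x
    rw [Real.norm_eq_abs, abs_of_nonneg (by positivity)]
    exact mul_le_mul_of_nonneg_left (hwle x) (Real.rpow_nonneg (norm_nonneg x) p)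
  set N := ∫ x, ‖x‖ ^ p * Real.exp (-α * f x) ∂μ with hN0
  -- pointwise two-variable inequality
  have hpt : ∀ x y : Euc d, ‖x‖ ^ p * Real.exp (-α * f x) + ‖y‖ ^ p * Real.exp (-α * f y) ≤
      C * (‖y‖ ^ p * Real.exp (-α * f x) + ‖x‖ ^ p * Real.exp (-α * f y)) := by
    have key : ∀ x y : Euc d, ‖y‖ ≤ ‖x‖ →
        ‖x‖ ^ p * Real.exp (-α * f x) + ‖y‖ ^ p * Real.exp (-α * f y) ≤
        C * (‖y‖ ^ p * Real.exp (-α * f x) + ‖x‖ ^ p * Real.exp (-α * f y)) := by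
      intro x y hxy
      refine scalar_core hp hl hcl hcu (le_max_left _ _) (le_max_right _ _)
        (norm_nonneg x) (norm_nonneg y) hxy (hwpos x) (hwpos y) ?_
      intro hAcond
      have h2 := hlow x
      have h3 := hup y
      have h1 : f y - f x ≤ cl * c0 + cu := by nlinarith
      have h4 : -α * f x ≤ α * cl * c0 + α * cu + -α * f y := by
        nlinarith [mul_le_mul_of_nonneg_left h1 hα.le]
      calc Real.exp (-α * f x) ≤ Real.exp (α * cl * c0 + α * cu + -α * f y) :=
            Real.exp_le_exp.mpr h4
        _ = Real.exp (α * cl * c0 + α * cu) * Real.exp (-α * f y) := Real.exp_add _ _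
    intro x y
    rcases le_total ‖y‖ ‖x‖ with h | h
    · exact key x y h
    · have := key y x h; linarith
  -- integrate the pointwise inequality twice
  have hNbound : N ≤ C * (M * D) := by
    have inner : ∀ y : Euc d,
        N + ‖y‖ ^ p * Real.exp (-α * f y) ≤
        C * (‖y‖ ^ p * D + M * Real.exp (-α * f y)) := by
      intro y
      rw [hN0, hD, hM0]
      have hInt1 : Integrable
          (fun x => ‖x‖ ^ p * Real.exp (-α * f x) + ‖y‖ ^ p * Real.exp (-α * f y)) μ :=
        hN.add (integrable_const _)
      have hInt2 : Integrable
          (fun x => C * (‖y‖ ^ p * Real.exp (-α * f x) + ‖x‖ ^ p * Real.exp (-α * f y))) μ :=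
        ((hw.const_mul _).add (hM.mul_const _)).const_mul C
      have h := integral_mono hInt1 hInt2 fun x => hpt x y
      rw [integral_add hN (integrable_const _), integral_const, integral_const_mul,
        integral_add (hw.const_mul _) (hM.mul_const _), integral_const_mul,
        integral_mul_const] at h
      simp only [measure_univ, ENNReal.toReal_one, probReal_univ, one_smul] at h
      exact h
    have hInt3 : Integrable (fun y : Euc d => N + ‖y‖ ^ p * Real.exp (-α * f y)) μ :=
      (integrable_const _).add hN
    have hInt4 : Integrable
        (fun y : Euc d => C * (‖y‖ ^ p * D + M * Real.exp (-α * f y))) μ :=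
      ((hM.mul_const _).add (hw.const_mul _)).const_mul C
    have h := integral_mono hInt3 hInt4 inner
    rw [integral_add (integrable_const _) hN, integral_const, integral_const_mul,
      integral_add (hM.mul_const _) (hw.const_mul _), integral_mul_const,
      integral_const_mul] at h
    simp only [measure_univ, ENNReal.toReal_one, probReal_univ, one_smul] at h
    rw [hN0, hD, hM0]
    linarith
  -- pass to the tilted measure
  set ν := μ.tilted (fun x => -α * f x) with hν
  have hνprob : IsProbabilityMeasure ν := isProbabilityMeasure_tilted hw
  haveI := hνprob
  have hnorm_le : ∀ x : Euc d, ‖x‖ ≤ 1 + ‖x‖ ^ p := by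
    intro x
    rcases le_total ‖x‖ 1 with h | h
    · nlinarith [Real.rpow_nonneg (norm_nonneg x) p]
    · calc ‖x‖ = ‖x‖ ^ (1:ℝ) := (Real.rpow_one _).symm
        _ ≤ ‖x‖ ^ p := Real.rpow_le_rpow_of_exponent_le h hp
        _ ≤ 1 + ‖x‖ ^ p := by linarith
  have hone : Integrable (fun x : Euc d => 1 + ‖x‖ ^ p) μ := (integrable_const _).add hM
  have hnν : Integrable (fun x : Euc d => ‖x‖) ν :=
    integrable_tilted_aux (continuous_const.mul hfc) hwle continuous_norm.aestronglyMeasurable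
      hone (fun x => by rw [abs_of_nonneg (norm_nonneg x)]; exact hnorm_le x)
  have hpν : Integrable (fun x : Euc d => ‖x‖ ^ p) ν :=
    integrable_tilted_aux (continuous_const.mul hfc) hwle hM.aestronglyMeasurable hone
      (fun x => by
        rw [abs_of_nonneg (Real.rpow_nonneg (norm_nonneg x) p)]; linarith)
  have hm : mConsensus α f μ = ∫ x, x ∂ν := by
    rw [hν, integral_tilted]
    unfold mConsensus
    simp_rw [div_eq_inv_mul, mul_smul]
    rw [integral_smul, ← hD]
  have hjen : (∫ x, ‖x‖ ∂ν) ^ p ≤ ∫ x, ‖x‖ ^ p ∂ν := by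
    have h := (convexOn_rpow hp).map_average_le
      (Real.continuous_rpow_const (by linarith)).continuousOn isClosed_Ici
      (by filter_upwards with x using norm_nonneg x) hnν hpν
    rwa [average_eq_integral, average_eq_integral] at h
  have hint_tilted : ∫ x, ‖x‖ ^ p ∂ν = D⁻¹ * N := by
    rw [hν, integral_tilted]
    simp_rw [smul_eq_mul, div_eq_inv_mul, mul_assoc, ← hD]
    rw [integral_const_mul, hN0]
    congr 1
    exact integral_congr_ae (by filter_upwards with x using mul_comm _ _)
  have h1 : ‖mConsensus α f μ‖ ≤ ∫ x, ‖x‖ ∂ν := by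
    rw [hm]; exact norm_integral_le_integral_norm _
  have h2 : ‖mConsensus α f μ‖ ^ p ≤ (∫ x, ‖x‖ ∂ν) ^ p :=
    Real.rpow_le_rpow (norm_nonneg _) h1 (by linarith)
  have h3 : D⁻¹ * N ≤ C * M := by
    have h4 := mul_le_mul_of_nonneg_left hNbound (inv_nonneg.mpr hDpos.le)
    calc D⁻¹ * N ≤ D⁻¹ * (C * (M * D)) := h4
      _ = C * M := by field_simp
  calc ‖mConsensus α f μ‖ ^ p ≤ (∫ x, ‖x‖ ∂ν) ^ p := h2
    _ ≤ ∫ x, ‖x‖ ^ p ∂ν := hjen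
    _ = D⁻¹ * N := hint_tilted
    _ ≤ C * M := h3

end
end

section
/- Let d ≥ 1, α > 0 and K > 0, and let f : ℝ^d → ℝ satisfy Assumption (A). Then there exists a constant L_m > 0, depending only on the constants in Assumption (A), K and α, such that for all Borel probability measures μ, ν on ℝ^d with ∫|x|² dμ(x) ≤ K and ∫|x|² dν(x) ≤ K, and for every Borel probability measure π on ℝ^d × ℝ^d whose first marginal is μ and whose second marginal is ν, one has |m_α^f(μ) − m_α^f(ν)| ≤ L_m (∫_{ℝ^d×ℝ^d} |x − y|² dπ(x,y))^{1/2}. (Taking the infimum over all such couplings π, this states that m_α^f is L_m-Lipschitz with respect to the 2-Wasserstein distance on the set of probability measures with second moment at most K.) -/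
open MeasureTheory Real Filter
open scoped ENNReal RealInnerProductSpace

noncomputable section

theorem poly_exp_bound (p ε l : ℝ) (hp : 0 ≤ p) (hε : 0 < ε) (hl : 0 < l) :
    ∃ C : ℝ, 0 < C ∧ ∀ r : ℝ, 0 ≤ r → (1 + r) ^ p * Real.exp (-(ε * r ^ l)) ≤ C := by
  obtain ⟨n, hn⟩ := exists_nat_ge p
  obtain ⟨k0, hk0⟩ := exists_nat_ge ((n : ℝ) / l)
  set k := k0 + 1 with hk
  have hkpos : 0 < (k : ℝ) := by positivity
  have hnk : (n : ℝ) ≤ (k : ℝ) * l := by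
    have : (n : ℝ) / l ≤ (k : ℝ) := by
      have : (k0 : ℝ) ≤ (k : ℝ) := by exact_mod_cast Nat.le_succ k0
      linarith
    calc (n : ℝ) = ((n : ℝ) / l) * l := by field_simp
    _ ≤ (k : ℝ) * l := by nlinarith [hl.le]
  refine ⟨2 ^ n * max 1 ((k : ℝ) ^ k / ε ^ k), by positivity, fun r hr => ?_⟩
  have h1r : (1 : ℝ) ≤ 1 + r := by linarith
  have hrp : (1 + r) ^ p ≤ (1 + r) ^ (n : ℕ) := by
    rw [← Real.rpow_natCast (1 + r) n]
    exact Real.rpow_le_rpow_of_exponent_le h1r hn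
  have hexp_le_one : Real.exp (-(ε * r ^ l)) ≤ 1 := by
    apply Real.exp_le_one_iff.mpr
    have : 0 ≤ r ^ l := Real.rpow_nonneg hr l
    nlinarith
  rcases le_or_gt r 1 with hr1 | hr1
  · have : (1 + r) ^ n ≤ 2 ^ n := by
      apply pow_le_pow_left₀ (by linarith) (by linarith)
    calc (1 + r) ^ p * Real.exp (-(ε * r ^ l)) ≤ (1 + r) ^ n * 1 := by
          apply mul_le_mul hrp hexp_le_one (Real.exp_nonneg _) (by positivity)
      _ ≤ 2 ^ n * 1 := by linarith
      _ ≤ 2 ^ n * max 1 ((k : ℝ) ^ k / ε ^ k) := by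
          apply mul_le_mul_of_nonneg_left (le_max_left _ _) (by positivity)
  · -- r > 1
    set z := ε * r ^ l with hz
    have hrlpos : 0 < r ^ l := Real.rpow_pos_of_pos (by linarith) l
    have hzpos : 0 < z := by positivity
    have hexpz : (z / k) ^ k ≤ Real.exp z := by
      have h1 : z / k ≤ Real.exp (z / k) := (Real.add_one_le_exp _).trans' (by linarith [hzpos, hkpos])
      calc (z / k) ^ k ≤ Real.exp (z / k) ^ k :=
            pow_le_pow_left₀ (by positivity) h1 k
        _ = Real.exp z := by
            rw [← Real.exp_nat_mul]; congr 1; field_simp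
    have hexpneg : Real.exp (-z) ≤ (k : ℝ) ^ k / z ^ k := by
      rw [Real.exp_neg]
      rw [div_eq_mul_inv]
      have hzk : 0 < (z / k) ^ k := by positivity
      have := inv_anti₀ hzk hexpz
      calc (Real.exp z)⁻¹ ≤ ((z / k) ^ k)⁻¹ := this
        _ = (k : ℝ) ^ k * (z ^ k)⁻¹ := by
            rw [div_pow]; rw [inv_div]; ring
    have hpow : (1 + r) ^ n ≤ 2 ^ n * r ^ (k * l) := by
      have h2 : (1 + r) ^ n ≤ (2 * r) ^ n := by
        apply pow_le_pow_left₀ (by linarith) (by linarith)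
      have h3 : (r : ℝ) ^ (n : ℕ) ≤ r ^ ((k : ℝ) * l) := by
        rw [← Real.rpow_natCast r n]
        exact Real.rpow_le_rpow_of_exponent_le hr1.le hnk
      calc (1 + r) ^ n ≤ (2 * r) ^ n := h2
        _ = 2 ^ n * r ^ n := by rw [mul_pow]
        _ ≤ 2 ^ n * r ^ ((k : ℝ) * l) := by
            apply mul_le_mul_of_nonneg_left h3 (by positivity)
    have hzk : z ^ k = ε ^ k * r ^ ((k : ℝ) * l) := by
      rw [hz, mul_pow]
      congr 1
      rw [← Real.rpow_natCast (r ^ l) k, ← Real.rpow_mul (by linarith : (0:ℝ) ≤ r)]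
      ring_nf
    have hrkl : 0 < r ^ ((k : ℝ) * l) := Real.rpow_pos_of_pos (by linarith) _
    calc (1 + r) ^ p * Real.exp (-z)
        ≤ (1 + r) ^ n * Real.exp (-z) := by
          apply mul_le_mul_of_nonneg_right hrp (Real.exp_nonneg _)
      _ ≤ (2 ^ n * r ^ ((k:ℝ) * l)) * ((k : ℝ) ^ k / z ^ k) := by
          apply mul_le_mul hpow hexpneg (Real.exp_nonneg _) (by positivity)
      _ = 2 ^ n * ((k : ℝ) ^ k / ε ^ k) := by
          rw [hzk]; field_simp
      _ ≤ 2 ^ n * max 1 ((k : ℝ) ^ k / ε ^ k) := by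
          apply mul_le_mul_of_nonneg_left (le_max_right _ _) (by positivity)

set_option maxHeartbeats 1000000 in
theorem key_pointwise {d : ℕ} (α : ℝ) (hα : 0 < α) (f : Euc d → ℝ)
    (Lf s cl c0 l : ℝ) (hLf : 0 < Lf) (hs : 0 ≤ s)
    (hlip : ∀ x y : Euc d, |f x - f y| ≤ Lf * (1 + ‖x‖ + ‖y‖) ^ s * ‖x - y‖)
    (hcl : 0 < cl) (hc0 : 0 < c0) (hl : 0 < l)
    (hlow : ∀ x : Euc d, cl * (‖x‖ ^ l - c0) ≤ f x - sInf (Set.range f)) :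
    ∃ CE : ℝ, 0 < CE ∧ ∀ x y : Euc d,
      (1 + ‖x‖ + ‖y‖) * |Real.exp (-α * f x) - Real.exp (-α * f y)| ≤ CE * ‖x - y‖ := by
  set fb := sInf (Set.range f) with hfb
  set g : Euc d → ℝ := fun x => Real.exp (-α * f x) with hgdef
  set A' : ℝ := Real.exp (-α * fb) * Real.exp (α * cl * c0) with hA'
  have hA'pos : 0 < A' := by positivity
  obtain ⟨C1, hC1pos, hC1⟩ := poly_exp_bound (s + 1) (α * cl) l (by linarith) (by positivity) hl
  -- bound on g using coercivity
  have hgbound : ∀ x : Euc d, g x ≤ A' * Real.exp (-(α * cl * ‖x‖ ^ l)) := by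
    intro x
    have h := hlow x
    have : -α * f x ≤ -α * fb + α * cl * c0 + -(α * cl * ‖x‖ ^ l) := by nlinarith
    calc g x = Real.exp (-α * f x) := rfl
      _ ≤ Real.exp (-α * fb + α * cl * c0 + -(α * cl * ‖x‖ ^ l)) := Real.exp_le_exp.mpr this
      _ = A' * Real.exp (-(α * cl * ‖x‖ ^ l)) := by rw [hA', ← Real.exp_add, ← Real.exp_add]
  set CE : ℝ := max (4 * (α * Lf * 4 ^ s) * A' * C1) (4 * A' * C1) with hCE
  have hCEpos : 0 < CE := lt_max_of_lt_right (by positivity)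
  refine ⟨CE, hCEpos, ?_⟩
  -- main asymmetric claim
  have main : ∀ x y : Euc d, f x ≤ f y →
      (1 + ‖x‖ + ‖y‖) * |g x - g y| ≤ CE * ‖x - y‖ := by
    intro x y hfxy
    set r := ‖x‖ with hr
    set u := ‖x - y‖ with hu
    have hr0 : 0 ≤ r := norm_nonneg _
    have hu0 : 0 ≤ u := norm_nonneg _
    have hy : ‖y‖ ≤ r + u := by
      calc ‖y‖ = ‖x - (x - y)‖ := by congr 1; abel
        _ ≤ ‖x‖ + ‖x - y‖ := norm_sub_le _ _
    set T := 1 + ‖x‖ + ‖y‖ with hT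
    have hT1 : (1 : ℝ) ≤ T := by have := norm_nonneg y; simp [hT]; linarith
    have hTle : T ≤ 2 * (1 + r) * (1 + u) := by
      have := norm_nonneg y; nlinarith
    -- difference of exponentials
    have hgd : |g x - g y| ≤ g x * min 1 (α * (f y - f x)) := by
      have hgxy : g y ≤ g x := Real.exp_le_exp.mpr (by nlinarith)
      rw [abs_of_nonneg (by linarith)]
      rcases min_cases 1 (α * (f y - f x)) with ⟨hm, _⟩ | ⟨hm, hm2⟩
      · rw [hm]
        have : 0 ≤ g y := Real.exp_nonneg _
        have : g x ≤ g x * 1 := by linarith [Real.exp_pos (-α * f x)]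
        linarith
      · rw [hm]
        have key : g y = g x * Real.exp (-(α * (f y - f x))) := by
          show Real.exp (-α * f y) = Real.exp (-α * f x) * Real.exp (-(α * (f y - f x)))
          rw [← Real.exp_add]; congr 1; ring
        have h1 : 1 - (α * (f y - f x)) ≤ Real.exp (-(α * (f y - f x))) := by
          have := Real.add_one_le_exp (-(α * (f y - f x))); linarith
        have hgxpos : 0 < g x := Real.exp_pos _
        rw [key]
        nlinarith
    have hgxb : g x ≤ A' * Real.exp (-(α * cl * r ^ l)) := hgbound x
    have hgx0 : 0 ≤ g x := (Real.exp_pos _).le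
    have hexp0 : 0 ≤ A' * Real.exp (-(α * cl * r ^ l)) := by positivity
    have hmin0 : 0 ≤ min 1 (α * (f y - f x)) := le_min zero_le_one (by nlinarith)
    have hlipxy : α * (f y - f x) ≤ α * Lf * T ^ s * u := by
      have h := hlip x y
      have h2 : f y - f x ≤ |f x - f y| := by rw [abs_sub_comm]; exact le_abs_self _
      have hTs : (0:ℝ) ≤ Lf * T ^ s * u := by positivity
      nlinarith [Real.rpow_nonneg (le_trans zero_le_one hT1) s]
    -- master bound pieces
    have hC1r : (1 + r) ^ (s + 1) * Real.exp (-(α * cl * r ^ l)) ≤ C1 := hC1 r hr0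
    have hrpow_split : (1 + r) ^ (s + 1) = (1 + r) ^ s * (1 + r) := by
      rw [Real.rpow_add_one (by positivity : (1:ℝ) + r ≠ 0)]
    have hrs0 : 0 ≤ (1 + r) ^ s := Real.rpow_nonneg (by linarith) s
    rcases le_or_gt u 1 with hu1 | hu1
    · -- small u case
      have hTs : T ^ s ≤ 4 ^ s * (1 + r) ^ s := by
        have h1 : T ≤ 4 * (1 + r) := by nlinarith
        calc T ^ s ≤ (4 * (1 + r)) ^ s :=
              Real.rpow_le_rpow (le_trans zero_le_one hT1) h1 hs
          _ = 4 ^ s * (1 + r) ^ s := Real.mul_rpow (by norm_num) (by linarith)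
      have hminle : min 1 (α * (f y - f x)) ≤ α * Lf * (4 ^ s * (1 + r) ^ s) * u := by
        calc min 1 (α * (f y - f x)) ≤ α * (f y - f x) := min_le_right _ _
          _ ≤ α * Lf * T ^ s * u := hlipxy
          _ ≤ α * Lf * (4 ^ s * (1 + r) ^ s) * u := by
              apply mul_le_mul_of_nonneg_right _ hu0
              apply mul_le_mul_of_nonneg_left hTs (by positivity)
      have h4s0 : (0:ℝ) < 4 ^ s := Real.rpow_pos_of_pos (by norm_num) s
      calc T * |g x - g y| ≤ T * (g x * min 1 (α * (f y - f x))) := by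
            apply mul_le_mul_of_nonneg_left hgd (by linarith)
        _ ≤ (2 * (1 + r) * (1 + u)) * ((A' * Real.exp (-(α * cl * r ^ l))) *
              (α * Lf * (4 ^ s * (1 + r) ^ s) * u)) := by
            apply mul_le_mul hTle _ (by positivity) (by positivity)
            exact mul_le_mul hgxb hminle hmin0 hexp0
        _ = (2 * (1 + u)) * (α * Lf * 4 ^ s) * A' *
              ((1 + r) ^ s * (1 + r) * Real.exp (-(α * cl * r ^ l))) * u := by ring
        _ ≤ (2 * (1 + 1)) * (α * Lf * 4 ^ s) * A' * C1 * u := by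
            apply mul_le_mul_of_nonneg_right _ hu0
            have he0 : 0 ≤ Real.exp (-(α * cl * r ^ l)) := (Real.exp_pos _).le
            have hC1' : (1 + r) ^ s * (1 + r) * Real.exp (-(α * cl * r ^ l)) ≤ C1 := by
              rw [← hrpow_split]; exact hC1r
            have hterm0 : 0 ≤ (1 + r) ^ s * (1 + r) * Real.exp (-(α * cl * r ^ l)) := by positivity
            have h2u : 2 * (1 + u) ≤ 2 * (1 + 1) := by linarith
            have := mul_le_mul (mul_le_mul (mul_le_mul h2u (le_refl (α * Lf * 4 ^ s))
              (by positivity) (by norm_num)) (le_refl A') hA'pos.le (by positivity)) hC1'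
              hterm0 (by positivity)
            linarith
        _ = (4 * (α * Lf * 4 ^ s) * A' * C1) * u := by ring
        _ ≤ CE * u := by
            apply mul_le_mul_of_nonneg_right (le_max_left _ _) hu0
    · -- large u case
      have h1r_le : (1 + r) ≤ (1 + r) ^ (s + 1) := by
        calc (1 + r) = (1 + r) ^ (1:ℝ) := (Real.rpow_one _).symm
          _ ≤ (1 + r) ^ (s + 1) := Real.rpow_le_rpow_of_exponent_le (by linarith) (by linarith)
      have hC1r' : (1 + r) * Real.exp (-(α * cl * r ^ l)) ≤ C1 := by
        calc (1 + r) * Real.exp (-(α * cl * r ^ l))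
            ≤ (1 + r) ^ (s + 1) * Real.exp (-(α * cl * r ^ l)) :=
              mul_le_mul_of_nonneg_right h1r_le (Real.exp_pos _).le
          _ ≤ C1 := hC1r
      have hminle : min 1 (α * (f y - f x)) ≤ 1 := min_le_left _ _
      calc T * |g x - g y| ≤ T * (g x * min 1 (α * (f y - f x))) := by
            apply mul_le_mul_of_nonneg_left hgd (by linarith)
        _ ≤ (2 * (1 + r) * (1 + u)) * ((A' * Real.exp (-(α * cl * r ^ l))) * 1) := by
            apply mul_le_mul hTle _ (by positivity) (by positivity)
            exact mul_le_mul hgxb hminle hmin0 hexp0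
        _ = 2 * A' * ((1 + r) * Real.exp (-(α * cl * r ^ l))) * (1 + u) := by ring
        _ ≤ 2 * A' * C1 * (2 * u) := by
            apply mul_le_mul _ (by linarith) (by linarith) (by positivity)
            apply mul_le_mul_of_nonneg_left hC1r' (by positivity)
        _ = (4 * A' * C1) * u := by ring
        _ ≤ CE * u := mul_le_mul_of_nonneg_right (le_max_right _ _) hu0
  intro x y
  rcases le_total (f x) (f y) with h | h
  · exact main x y h
  · have := main y x h
    have e1 : |g y - g x| = |g x - g y| := abs_sub_comm _ _
    have e2 : ‖y - x‖ = ‖x - y‖ := norm_sub_rev _ _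
    calc (1 + ‖x‖ + ‖y‖) * |g x - g y| = (1 + ‖y‖ + ‖x‖) * |g y - g x| := by
          rw [e1]; ring
      _ ≤ CE * ‖y - x‖ := this
      _ = CE * ‖x - y‖ := by rw [e2]


theorem int_le_sqrt {X : Type*} [MeasurableSpace X] (pp : Measure X) [IsProbabilityMeasure pp]
    (u : X → ℝ) (hu0 : ∀ q, 0 ≤ u q) (hu1 : Integrable u pp)
    (hu2 : Integrable (fun q => u q ^ 2) pp) :
    ∫ q, u q ∂pp ≤ Real.sqrt (∫ q, u q ^ 2 ∂pp) := by
  set I := ∫ q, u q ^ 2 ∂pp with hI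
  have hI0 : 0 ≤ I := integral_nonneg (fun q => sq_nonneg _)
  rcases eq_or_lt_of_le hI0 with h0 | hIpos
  · have hzero : (fun q => u q ^ 2) =ᵐ[pp] 0 :=
      (integral_eq_zero_iff_of_nonneg (fun q => sq_nonneg _) hu2).mp h0.symm
    have huz : u =ᵐ[pp] 0 := by
      filter_upwards [hzero] with q hq
      have : u q ^ 2 = 0 := hq
      simpa using pow_eq_zero_iff (n := 2) (by norm_num) |>.mp this
    rw [integral_congr_ae huz]
    simp [Real.sqrt_nonneg]
  · set c := Real.sqrt I with hc
    have hcpos : 0 < c := Real.sqrt_pos.mpr hIpos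
    have hc2 : c ^ 2 = I := Real.sq_sqrt hI0
    have hpt : ∀ q, u q ≤ (u q ^ 2 + I) / (2 * c) := by
      intro q
      rw [le_div_iff₀ (by positivity)]
      nlinarith [sq_nonneg (u q - c)]
    have hint : Integrable (fun q => (u q ^ 2 + I) / (2 * c)) pp :=
      (hu2.add (integrable_const I)).div_const _
    calc ∫ q, u q ∂pp ≤ ∫ q, (u q ^ 2 + I) / (2 * c) ∂pp := integral_mono hu1 hint hpt
      _ = (I + I) / (2 * c) := by
          rw [integral_div, integral_add hu2 (integrable_const I), integral_const]
          simp [measure_univ]; rw [← hI]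
      _ = I / c := by ring
      _ = c := Real.div_sqrt

set_option maxHeartbeats 1000000 in
/-- Lipschitz continuity of the consensus point in the 2-Wasserstein
distance, expressed through couplings. -/
theorem stmt1 (d : ℕ) (hd : 1 ≤ d) (α K : ℝ) (hα : 0 < α) (hK : 0 < K)
    (f : Euc d → ℝ) (Lf s cl cu c0 l : ℝ) (hf : AssumptionA f Lf s cl cu c0 l) :
    ∃ L : ℝ, 0 < L ∧
      ∀ μ ν : Measure (Euc d), IsProbabilityMeasure μ → IsProbabilityMeasure ν →
        Integrable (fun x => ‖x‖ ^ 2) μ → Integrable (fun x => ‖x‖ ^ 2) ν →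
        (∫ x, ‖x‖ ^ 2 ∂μ) ≤ K → (∫ x, ‖x‖ ^ 2 ∂ν) ≤ K →
        ∀ pl : Measure (Euc d × Euc d), IsProbabilityMeasure pl →
          pl.map Prod.fst = μ → pl.map Prod.snd = ν →
          ‖mConsensus α f μ - mConsensus α f ν‖ ≤
            L * Real.sqrt (∫ q : Euc d × Euc d, ‖q.1 - q.2‖ ^ 2 ∂pl) := by
  obtain ⟨hfc, hfbdd, hLf, hs, hlip, hcl, hcu, hc0, hl, hlow, hup⟩ := hf
  set fb := sInf (Set.range f) with hfb
  obtain ⟨CE, hCEpos, hCE⟩ := key_pointwise α hα f Lf s cl c0 l hLf hs hlip hcl hc0 hl hlow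
  obtain ⟨C1, hC1pos, hC1⟩ := poly_exp_bound (s + 1) (α * cl) l (by linarith) (by positivity) hl
  set g : Euc d → ℝ := fun x => Real.exp (-α * f x) with hgdef
  set G : Euc d → Euc d := fun x => Real.exp (-α * f x) • x with hGdef
  have hgc : Continuous g := Real.continuous_exp.comp (continuous_const.mul hfc)
  have hGc : Continuous G := (Real.continuous_exp.comp (continuous_const.mul hfc)).smul continuous_id
  set A : ℝ := Real.exp (-α * fb) with hA
  have hApos : 0 < A := Real.exp_pos _
  have hfble : ∀ x, fb ≤ f x := fun x => csInf_le hfbdd ⟨x, rfl⟩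
  have hgpos : ∀ x, 0 < g x := fun x => Real.exp_pos _
  have hgA : ∀ x, g x ≤ A := fun x => Real.exp_le_exp.mpr (by nlinarith [hfble x])
  set A' : ℝ := A * Real.exp (α * cl * c0) with hA'
  have hA'pos : 0 < A' := by positivity
  have hgbound : ∀ x : Euc d, g x ≤ A' * Real.exp (-(α * cl * ‖x‖ ^ l)) := by
    intro x
    have h := hlow x
    have h2 : -α * f x ≤ -α * fb + α * cl * c0 + -(α * cl * ‖x‖ ^ l) := by nlinarith
    calc g x ≤ Real.exp (-α * fb + α * cl * c0 + -(α * cl * ‖x‖ ^ l)) := Real.exp_le_exp.mpr h2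
      _ = A' * Real.exp (-(α * cl * ‖x‖ ^ l)) := by rw [hA', hA, ← Real.exp_add, ← Real.exp_add]
  set CN : ℝ := A' * C1 with hCN
  have hCNpos : 0 < CN := by positivity
  have hGbd : ∀ x : Euc d, ‖G x‖ ≤ CN := by
    intro x
    have hnG : ‖G x‖ = g x * ‖x‖ := by
      show ‖Real.exp (-α * f x) • x‖ = g x * ‖x‖
      rw [norm_smul, Real.norm_eq_abs, abs_of_pos (hgpos x)]
    have hxr : ‖x‖ ≤ (1 + ‖x‖) ^ (s + 1) := by
      have h1 : (1 + ‖x‖) ^ (1:ℝ) = 1 + ‖x‖ := Real.rpow_one _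
      have h2 : (1 + ‖x‖) ^ (1:ℝ) ≤ (1 + ‖x‖) ^ (s + 1) :=
        Real.rpow_le_rpow_of_exponent_le (by linarith [norm_nonneg x]) (by linarith)
      rw [h1] at h2
      linarith [norm_nonneg x]
    calc ‖G x‖ = g x * ‖x‖ := hnG
      _ ≤ (A' * Real.exp (-(α * cl * ‖x‖ ^ l))) * (1 + ‖x‖) ^ (s + 1) := by
          apply mul_le_mul (hgbound x) hxr (norm_nonneg x) (by positivity)
      _ = A' * ((1 + ‖x‖) ^ (s + 1) * Real.exp (-(α * cl * ‖x‖ ^ l))) := by ring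
      _ ≤ A' * C1 := mul_le_mul_of_nonneg_left (hC1 ‖x‖ (norm_nonneg x)) hA'pos.le
  -- pointwise Lipschitz bounds
  have hP1 : ∀ x y : Euc d, |g x - g y| ≤ CE * ‖x - y‖ := by
    intro x y
    have h1 : (1:ℝ) ≤ 1 + ‖x‖ + ‖y‖ := by linarith [norm_nonneg x, norm_nonneg y]
    calc |g x - g y| ≤ (1 + ‖x‖ + ‖y‖) * |g x - g y| :=
          le_mul_of_one_le_left (abs_nonneg _) h1
      _ ≤ CE * ‖x - y‖ := hCE x y
  set CX : ℝ := A + CE with hCX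
  have hCXpos : 0 < CX := by positivity
  have hP2 : ∀ x y : Euc d, ‖G x - G y‖ ≤ CX * ‖x - y‖ := by
    intro x y
    have hid : G x - G y = g x • (x - y) + (g x - g y) • y := by
      show Real.exp (-α * f x) • x - Real.exp (-α * f y) • y =
        Real.exp (-α * f x) • (x - y) + (Real.exp (-α * f x) - Real.exp (-α * f y)) • y
      rw [smul_sub, sub_smul]; abel
    have hy1 : ‖y‖ ≤ 1 + ‖x‖ + ‖y‖ := by linarith [norm_nonneg x, norm_nonneg y]
    calc ‖G x - G y‖ = ‖g x • (x - y) + (g x - g y) • y‖ := by rw [hid]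
      _ ≤ ‖g x • (x - y)‖ + ‖(g x - g y) • y‖ := norm_add_le _ _
      _ = g x * ‖x - y‖ + |g x - g y| * ‖y‖ := by
          rw [norm_smul, norm_smul, Real.norm_eq_abs, Real.norm_eq_abs, abs_of_pos (hgpos x)]
      _ ≤ A * ‖x - y‖ + CE * ‖x - y‖ := by
          have t1 : g x * ‖x - y‖ ≤ A * ‖x - y‖ :=
            mul_le_mul_of_nonneg_right (hgA x) (norm_nonneg _)
          have t2 : |g x - g y| * ‖y‖ ≤ CE * ‖x - y‖ := by
            calc |g x - g y| * ‖y‖ ≤ (1 + ‖x‖ + ‖y‖) * |g x - g y| := by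
                  rw [mul_comm]; exact mul_le_mul_of_nonneg_right hy1 (abs_nonneg _) |>.trans_eq (by ring)
              _ ≤ CE * ‖x - y‖ := hCE x y
          linarith
      _ = CX * ‖x - y‖ := by rw [hCX]; ring
  -- lower bound on the normalizing constant
  set R : ℝ := Real.sqrt (2 * K) with hR
  have hRpos : 0 < R := Real.sqrt_pos.mpr (by linarith)
  set B : ℝ := fb + cu * (R ^ l + 1) with hB
  set z : ℝ := Real.exp (-α * B) / 2 with hz
  have hzpos : 0 < z := by positivity
  have hZlb : ∀ m : Measure (Euc d), IsProbabilityMeasure m → Integrable (fun x => ‖x‖ ^ 2) m →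
      (∫ x, ‖x‖ ^ 2 ∂m) ≤ K → z ≤ ∫ x, g x ∂m := by
    intro m hm hint hKm
    set E : Set (Euc d) := {x | ‖x‖ ≤ R} with hE
    have hEmeas : MeasurableSet E := measurableSet_le continuous_norm.measurable measurable_const
    have hRsq : R ^ 2 = 2 * K := Real.sq_sqrt (by linarith)
    have hgint : Integrable g m :=
      (integrable_const A).mono' hgc.aestronglyMeasurable
        (ae_of_all _ fun x => by rw [Real.norm_eq_abs, abs_of_pos (hgpos x)]; exact hgA x)
    -- Markov
    have hindle : ∀ x, Set.indicator Eᶜ (fun _ => 2 * K) x ≤ ‖x‖ ^ 2 := by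
      intro x
      by_cases hx : x ∈ Eᶜ
      · rw [Set.indicator_of_mem hx]
        have hxR : R < ‖x‖ := not_le.mp hx
        nlinarith [norm_nonneg x]
      · rw [Set.indicator_of_notMem hx]; positivity
    have hindint : Integrable (Set.indicator Eᶜ fun _ => 2 * K) m :=
      (integrable_const _).indicator hEmeas.compl
    have hMar : (m Eᶜ).toReal * (2 * K) ≤ K := by
      have h := integral_mono hindint hint hindle
      rw [integral_indicator_const _ hEmeas.compl, smul_eq_mul, measureReal_def] at h
      linarith
    have hcompl : (m Eᶜ).toReal ≤ 1 / 2 := by nlinarith [ENNReal.toReal_nonneg (a := m Eᶜ)]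
    have hsum : (m E).toReal + (m Eᶜ).toReal = 1 := by
      rw [← ENNReal.toReal_add (measure_ne_top m E) (measure_ne_top m Eᶜ),
        measure_add_measure_compl hEmeas, measure_univ, ENNReal.toReal_one]
    have hmE : 1 / 2 ≤ (m E).toReal := by linarith
    -- lower bound
    have hEg : ∀ x, Set.indicator E (fun _ => Real.exp (-α * B)) x ≤ g x := by
      intro x
      by_cases hx : x ∈ E
      · rw [Set.indicator_of_mem hx]
        have hxR : ‖x‖ ≤ R := hx
        have hrl : ‖x‖ ^ l ≤ R ^ l := Real.rpow_le_rpow (norm_nonneg x) hxR hl.le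
        have hfx : f x ≤ B := by
          have := hup x
          rw [hB]; nlinarith
        exact Real.exp_le_exp.mpr (by nlinarith)
      · rw [Set.indicator_of_notMem hx]; exact (hgpos x).le
    have h := integral_mono ((integrable_const _).indicator hEmeas) hgint hEg
    rw [integral_indicator_const _ hEmeas, smul_eq_mul, measureReal_def] at h
    have : z ≤ (m E).toReal * Real.exp (-α * B) := by
      rw [hz]
      have h0 : 0 < Real.exp (-α * B) := Real.exp_pos _
      nlinarith
    linarith
  -- the constant
  set L : ℝ := z⁻¹ * CX + z⁻¹ * z⁻¹ * (CE * CN) with hL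
  have hLpos : 0 < L := by positivity
  refine ⟨L, hLpos, ?_⟩
  intro μ ν hμp hνp hμ2 hν2 hμK hνK pl hplp hfst hsnd
  -- integrabilities with respect to pl
  have hg1c : Continuous fun q : Euc d × Euc d => g q.1 := hgc.comp continuous_fst
  have hg2c : Continuous fun q : Euc d × Euc d => g q.2 := hgc.comp continuous_snd
  have hG1c : Continuous fun q : Euc d × Euc d => G q.1 := hGc.comp continuous_fst
  have hG2c : Continuous fun q : Euc d × Euc d => G q.2 := hGc.comp continuous_snd
  have hg1i : Integrable (fun q : Euc d × Euc d => g q.1) pl :=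
    (integrable_const A).mono' hg1c.aestronglyMeasurable
      (ae_of_all _ fun q => by rw [Real.norm_eq_abs, abs_of_pos (hgpos q.1)]; exact hgA q.1)
  have hg2i : Integrable (fun q : Euc d × Euc d => g q.2) pl :=
    (integrable_const A).mono' hg2c.aestronglyMeasurable
      (ae_of_all _ fun q => by rw [Real.norm_eq_abs, abs_of_pos (hgpos q.2)]; exact hgA q.2)
  have hG1i : Integrable (fun q : Euc d × Euc d => G q.1) pl :=
    (integrable_const CN).mono' hG1c.aestronglyMeasurable (ae_of_all _ fun q => hGbd q.1)
  have hG2i : Integrable (fun q : Euc d × Euc d => G q.2) pl :=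
    (integrable_const CN).mono' hG2c.aestronglyMeasurable (ae_of_all _ fun q => hGbd q.2)
  have hgiμ : Integrable g μ :=
    (integrable_const A).mono' hgc.aestronglyMeasurable
      (ae_of_all _ fun x => by rw [Real.norm_eq_abs, abs_of_pos (hgpos x)]; exact hgA x)
  have hgiν : Integrable g ν :=
    (integrable_const A).mono' hgc.aestronglyMeasurable
      (ae_of_all _ fun x => by rw [Real.norm_eq_abs, abs_of_pos (hgpos x)]; exact hgA x)
  have hGiν : Integrable G ν :=
    (integrable_const CN).mono' hGc.aestronglyMeasurable (ae_of_all _ fun x => hGbd x)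
  -- transfer of second moments
  have hm1 : Integrable (fun q : Euc d × Euc d => ‖q.1‖ ^ 2) pl := by
    rw [← hfst] at hμ2
    exact (integrable_map_measure (continuous_norm.pow 2).aestronglyMeasurable
      measurable_fst.aemeasurable).mp hμ2
  have hm2 : Integrable (fun q : Euc d × Euc d => ‖q.2‖ ^ 2) pl := by
    rw [← hsnd] at hν2
    exact (integrable_map_measure (continuous_norm.pow 2).aestronglyMeasurable
      measurable_snd.aemeasurable).mp hν2
  have hu2i : Integrable (fun q : Euc d × Euc d => ‖q.1 - q.2‖ ^ 2) pl := by
    apply ((hm1.add hm2).const_mul 2).mono'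
      ((continuous_fst.sub continuous_snd).norm.pow 2).aestronglyMeasurable
    apply ae_of_all _ fun q => ?_
    show ‖‖q.1 - q.2‖ ^ 2‖ ≤ _
    rw [Real.norm_eq_abs, abs_of_nonneg (by positivity)]
    simp only [Pi.add_apply]
    have h := norm_sub_le q.1 q.2
    nlinarith [sq_nonneg (‖q.1‖ - ‖q.2‖), mul_self_le_mul_self (norm_nonneg (q.1 - q.2)) h]
  have hu1i : Integrable (fun q : Euc d × Euc d => ‖q.1 - q.2‖) pl := by
    apply ((integrable_const (1:ℝ)).add hu2i).mono'
      (continuous_fst.sub continuous_snd).norm.aestronglyMeasurable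
    apply ae_of_all _ fun q => ?_
    show ‖‖q.1 - q.2‖‖ ≤ _
    rw [Real.norm_eq_abs, abs_of_nonneg (norm_nonneg _)]
    rcases le_or_gt (‖q.1 - q.2‖) 1 with h | h
    · simp only [Pi.add_apply]; nlinarith [sq_nonneg (‖q.1 - q.2‖)]
    · simp only [Pi.add_apply]; nlinarith
  -- Cauchy-Schwarz
  set W : ℝ := Real.sqrt (∫ q : Euc d × Euc d, ‖q.1 - q.2‖ ^ 2 ∂pl) with hW
  have hW0 : 0 ≤ W := Real.sqrt_nonneg _
  have hCS : ∫ q : Euc d × Euc d, ‖q.1 - q.2‖ ∂pl ≤ W :=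
    int_le_sqrt pl _ (fun q => norm_nonneg _) hu1i hu2i
  -- marginal identities
  have hZμeq : ∫ x, g x ∂μ = ∫ q : Euc d × Euc d, g q.1 ∂pl := by
    rw [← hfst]
    exact integral_map measurable_fst.aemeasurable hgc.aestronglyMeasurable
  have hZνeq : ∫ x, g x ∂ν = ∫ q : Euc d × Euc d, g q.2 ∂pl := by
    rw [← hsnd]
    exact integral_map measurable_snd.aemeasurable hgc.aestronglyMeasurable
  have hNμeq : ∫ x, G x ∂μ = ∫ q : Euc d × Euc d, G q.1 ∂pl := by
    rw [← hfst]
    exact integral_map measurable_fst.aemeasurable hGc.aestronglyMeasurable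
  have hNνeq : ∫ x, G x ∂ν = ∫ q : Euc d × Euc d, G q.2 ∂pl := by
    rw [← hsnd]
    exact integral_map measurable_snd.aemeasurable hGc.aestronglyMeasurable
  -- difference bounds
  have hdZ : |(∫ x, g x ∂μ) - ∫ x, g x ∂ν| ≤ CE * W := by
    rw [hZμeq, hZνeq, ← integral_sub hg1i hg2i]
    calc |∫ q : Euc d × Euc d, (g q.1 - g q.2) ∂pl|
        ≤ ∫ q : Euc d × Euc d, |g q.1 - g q.2| ∂pl := by
          simpa [Real.norm_eq_abs] using
            norm_integral_le_integral_norm (μ := pl) (fun q : Euc d × Euc d => g q.1 - g q.2)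
      _ ≤ ∫ q : Euc d × Euc d, CE * ‖q.1 - q.2‖ ∂pl := by
          apply integral_mono (hg1i.sub hg2i).abs (hu1i.const_mul CE)
          exact fun q => hP1 q.1 q.2
      _ = CE * ∫ q : Euc d × Euc d, ‖q.1 - q.2‖ ∂pl := MeasureTheory.integral_const_mul _ _
      _ ≤ CE * W := mul_le_mul_of_nonneg_left hCS hCEpos.le
  have hdN : ‖(∫ x, G x ∂μ) - ∫ x, G x ∂ν‖ ≤ CX * W := by
    rw [hNμeq, hNνeq, ← integral_sub hG1i hG2i]
    calc ‖∫ q : Euc d × Euc d, (G q.1 - G q.2) ∂pl‖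
        ≤ ∫ q : Euc d × Euc d, ‖G q.1 - G q.2‖ ∂pl := norm_integral_le_integral_norm _
      _ ≤ ∫ q : Euc d × Euc d, CX * ‖q.1 - q.2‖ ∂pl := by
          apply integral_mono (hG1i.sub hG2i).norm (hu1i.const_mul CX)
          exact fun q => hP2 q.1 q.2
      _ = CX * ∫ q : Euc d × Euc d, ‖q.1 - q.2‖ ∂pl := MeasureTheory.integral_const_mul _ _
      _ ≤ CX * W := mul_le_mul_of_nonneg_left hCS hCXpos.le
  have hNνbd : ‖∫ x, G x ∂ν‖ ≤ CN := by
    calc ‖∫ x, G x ∂ν‖ ≤ ∫ x, ‖G x‖ ∂ν := norm_integral_le_integral_norm _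
      _ ≤ ∫ _x, CN ∂ν := integral_mono hGiν.norm (integrable_const CN) (fun x => hGbd x)
      _ = CN := by simp [measure_univ]
  -- denominators
  have hZμ : z ≤ ∫ x, g x ∂μ := hZlb μ hμp hμ2 hμK
  have hZν : z ≤ ∫ x, g x ∂ν := hZlb ν hνp hν2 hνK
  set Zμ : ℝ := ∫ x, g x ∂μ with hZμd
  set Zν : ℝ := ∫ x, g x ∂ν with hZνd
  set Nμ : Euc d := ∫ x, G x ∂μ with hNμd
  set Nν : Euc d := ∫ x, G x ∂ν with hNνd
  have hZμpos : 0 < Zμ := lt_of_lt_of_le hzpos hZμ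
  have hZνpos : 0 < Zν := lt_of_lt_of_le hzpos hZν
  -- final combination
  have hmc : mConsensus α f μ - mConsensus α f ν =
      Zμ⁻¹ • (Nμ - Nν) + (Zμ⁻¹ - Zν⁻¹) • Nν := by
    show (∫ x, Real.exp (-α * f x) ∂μ)⁻¹ • (∫ x, Real.exp (-α * f x) • x ∂μ) -
      (∫ x, Real.exp (-α * f x) ∂ν)⁻¹ • (∫ x, Real.exp (-α * f x) • x ∂ν) = _
    rw [smul_sub, sub_smul]
    abel
  have hinv1 : Zμ⁻¹ ≤ z⁻¹ := inv_anti₀ hzpos hZμ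
  have hinv2 : Zν⁻¹ ≤ z⁻¹ := inv_anti₀ hzpos hZν
  have hinvdiff : |Zμ⁻¹ - Zν⁻¹| ≤ z⁻¹ * z⁻¹ * (CE * W) := by
    have hid : Zμ⁻¹ - Zν⁻¹ = (Zν - Zμ) * (Zμ⁻¹ * Zν⁻¹) := by
      field_simp
    rw [hid, abs_mul]
    have h1 : |Zν - Zμ| ≤ CE * W := by rw [abs_sub_comm]; exact hdZ
    have h2 : |Zμ⁻¹ * Zν⁻¹| ≤ z⁻¹ * z⁻¹ := by
      rw [abs_mul, abs_of_pos (inv_pos.mpr hZμpos), abs_of_pos (inv_pos.mpr hZνpos)]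
      exact mul_le_mul hinv1 hinv2 (inv_pos.mpr hZνpos).le (inv_pos.mpr hzpos).le
    calc |Zν - Zμ| * |Zμ⁻¹ * Zν⁻¹| ≤ (CE * W) * (z⁻¹ * z⁻¹) :=
        mul_le_mul h1 h2 (abs_nonneg _) (by positivity)
      _ = z⁻¹ * z⁻¹ * (CE * W) := by ring
  calc ‖mConsensus α f μ - mConsensus α f ν‖
      = ‖Zμ⁻¹ • (Nμ - Nν) + (Zμ⁻¹ - Zν⁻¹) • Nν‖ := by rw [hmc]
    _ ≤ ‖Zμ⁻¹ • (Nμ - Nν)‖ + ‖(Zμ⁻¹ - Zν⁻¹) • Nν‖ := norm_add_le _ _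
    _ = Zμ⁻¹ * ‖Nμ - Nν‖ + |Zμ⁻¹ - Zν⁻¹| * ‖Nν‖ := by
        rw [norm_smul, norm_smul, Real.norm_eq_abs, Real.norm_eq_abs,
          abs_of_pos (inv_pos.mpr hZμpos)]
    _ ≤ z⁻¹ * (CX * W) + (z⁻¹ * z⁻¹ * (CE * W)) * CN := by
        have t1 : Zμ⁻¹ * ‖Nμ - Nν‖ ≤ z⁻¹ * (CX * W) :=
          mul_le_mul hinv1 hdN (norm_nonneg _) (by positivity)
        have t2 : |Zμ⁻¹ - Zν⁻¹| * ‖Nν‖ ≤ (z⁻¹ * z⁻¹ * (CE * W)) * CN :=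
          mul_le_mul hinvdiff hNνbd (norm_nonneg _) (by positivity)
        linarith
    _ = L * W := by rw [hL]; ring

end
end

section
/- Let d ≥ 1 and λ, σ, α, T, ε, R > 0, let f satisfy Assumption (A), and let φ be a cutoff function with associated φ^R. Let ρ : [0,T] × ℝ^d → ℝ satisfy the regularity and decay conditions, suppose ∫_{ℝ^d} e^{−α f(x)} ρ(t,x) dx > 0 for every t ∈ [0,T], and assume ρ satisfies pointwise the regularized equation ∂_t ρ = λ ∇_x·(h ρ) + (σ²/2) Δ_x((|h|² + ε²) ρ), where h(t,x) := (x − m_α^f(ρ(t,·))) φ^R(x − m_α^f(ρ(t,·))). If ρ(0,x) ≥ 0 for all x ∈ ℝ^d, then ρ(t,x) ≥ 0 for all (t,x) ∈ [0,T] × ℝ^d. -/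
open MeasureTheory Real Filter
open scoped ENNReal RealInnerProductSpace

noncomputable section

section AuxMaxPrinciple
variable {d : ℕ}


lemma contDiff_pd {g : Euc d → ℝ} {m n : WithTop ℕ∞} (hg : ContDiff ℝ n g) (h : m + 1 ≤ n)
    (i : Fin d) : ContDiff ℝ m (pd g i) := by
  have := (ContinuousLinearMap.apply ℝ ℝ (EuclideanSpace.single i 1)).contDiff.comp
    (hg.fderiv_right h)
  exact this

lemma pd_mul {u w : Euc d → ℝ} {x : Euc d} (hu : DifferentiableAt ℝ u x)
    (hw : DifferentiableAt ℝ w x) (i : Fin d) :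
    pd (fun y => u y * w y) i x = pd u i x * w x + u x * pd w i x := by
  unfold pd
  rw [fderiv_fun_mul hu hw]
  simp
  ring

lemma pd_add {u w : Euc d → ℝ} {x : Euc d} (hu : DifferentiableAt ℝ u x)
    (hw : DifferentiableAt ℝ w x) (i : Fin d) :
    pd (fun y => u y + w y) i x = pd u i x + pd w i x := by
  unfold pd
  rw [fderiv_fun_add hu hw]
  simp

lemma pd_congr {u w : Euc d → ℝ} {x : Euc d} (h : u =ᶠ[nhds x] w) (i : Fin d) :
    pd u i x = pd w i x := by
  unfold pd; rw [h.fderiv_eq]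

lemma pd_const {c : ℝ} {x : Euc d} (i : Fin d) : pd (fun _ => c) i x = 0 := by
  unfold pd; simp

lemma pd_comp_sub {g : Euc d → ℝ} (hg : Differentiable ℝ g) (m : Euc d) (i : Fin d) (x : Euc d) :
    pd (fun y => g (y - m)) i x = pd g i (x - m) := by
  have h1 : HasFDerivAt (fun y : Euc d => y - m) (ContinuousLinearMap.id ℝ (Euc d)) x :=
    (hasFDerivAt_id x).sub_const m
  have h2 := ((hg (x - m)).hasFDerivAt).comp x h1
  have h3 : HasFDerivAt (fun y => g (y - m)) ((fderiv ℝ g (x - m)).comp (ContinuousLinearMap.id ℝ (Euc d))) x := h2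
  unfold pd
  rw [h3.fderiv]
  simp



/-- At a global minimum of a differentiable 1-D function, the second derivative is ≥ 0. -/
lemma second_deriv_test {g : ℝ → ℝ} (hg : Differentiable ℝ g)
    (hg2 : DifferentiableAt ℝ (deriv g) 0) (hmin : ∀ s, g 0 ≤ g s) :
    0 ≤ deriv (deriv g) 0 := by
  by_contra hneg
  push_neg at hneg
  set q := deriv g with hq
  have hq0 : q 0 = 0 := by
    have : IsLocalMin g 0 := (isMinOn_univ_iff.mpr hmin).isLocalMin (by simp)
    exact this.deriv_eq_zero
  have hslope : Tendsto (slope q 0) (nhdsWithin 0 {0}ᶜ) (nhds (deriv q 0)) :=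
    hasDerivAt_iff_tendsto_slope.mp hg2.hasDerivAt
  have hev : ∀ᶠ s in nhdsWithin 0 {0}ᶜ, slope q 0 s < 0 :=
    hslope.eventually_lt_const hneg
  rw [eventually_nhdsWithin_iff] at hev
  rw [Metric.eventually_nhds_iff] at hev
  obtain ⟨δ, hδ, hδ'⟩ := hev
  have hqneg : ∀ s, 0 < s → s < δ → q s < 0 := by
    intro s hs hsδ
    have h1 : slope q 0 s < 0 := by
      apply hδ' (by simpa [abs_of_pos hs] using hsδ)
      simp [ne_of_gt hs]
    rw [slope_def_field] at h1
    have : q s / s < 0 := by simpa [hq0] using h1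
    rcases div_neg_iff.mp this with h | h
    · linarith [h.2]
    · exact h.1
  have hanti : StrictAntiOn g (Set.Icc 0 (δ/2)) := by
    apply strictAntiOn_of_deriv_neg (convex_Icc _ _) (hg.continuous.continuousOn)
    intro s hs
    rw [interior_Icc] at hs
    exact hqneg s hs.1 (lt_of_lt_of_le hs.2 (by linarith))
  have : g (δ/2) < g 0 := hanti (by constructor <;> linarith) (by constructor <;> linarith) (by linarith)
  exact absurd (hmin (δ/2)) (not_le.mpr this)

lemma cutoffH_contDiff {φ : ℝ → ℝ} {Cφ R : ℝ} (hφ : IsCutoff φ Cφ) (hR : 0 < R) :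
    ContDiff ℝ 2 (fun z : Euc d => φ (‖z‖ / R) • z) := by
  rw [contDiff_iff_contDiffAt]
  intro z
  rcases lt_or_ge ‖z‖ R with h | h
  · have hev : (fun z : Euc d => φ (‖z‖ / R) • z) =ᶠ[nhds z] (fun z => z) := by
      filter_upwards [Metric.ball_mem_nhds z (show (0:ℝ) < R - ‖z‖ by linarith)] with y hy
      have hy' : ‖y‖ < R := by
        have := norm_sub_norm_le y z
        rw [Metric.mem_ball, dist_eq_norm] at hy
        linarith
      rw [hφ.2.1 _ (by rw [div_le_one hR]; linarith), one_smul]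
    exact contDiffAt_id.congr_of_eventuallyEq hev
  · have hz : z ≠ 0 := by
      intro h0; rw [h0, norm_zero] at h; linarith
    exact ((hφ.1.contDiffAt.comp z (((contDiffAt_norm ℝ hz).div_const R))).smul contDiffAt_id)

lemma cutoffH_eq_zero {φ : ℝ → ℝ} {Cφ R : ℝ} (hφ : IsCutoff φ Cφ) (hR : 0 < R)
    {z : Euc d} (hz : 2 * R ≤ ‖z‖) : φ (‖z‖ / R) • z = 0 := by
  rw [hφ.2.2.1 _ (by rw [le_div_iff₀ hR]; linarith), zero_smul]

/-- A continuous function vanishing outside a ball is bounded. -/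
lemma bounded_of_vanish {g : Euc d → ℝ} (hg : Continuous g) {M : ℝ}
    (h0 : ∀ z : Euc d, M < ‖z‖ → g z = 0) : ∃ C : ℝ, ∀ z, |g z| ≤ C := by
  rcases le_or_gt 0 M with hM | hM
  · obtain ⟨z₀, hz₀, hmax⟩ := (isCompact_closedBall (0 : Euc d) M).exists_isMaxOn
      (Metric.nonempty_closedBall.mpr hM) (hg.abs.continuousOn)
    refine ⟨|g z₀|, fun z => ?_⟩
    rcases le_or_gt ‖z‖ M with h | h
    · exact hmax (by simpa [Metric.mem_closedBall, dist_eq_norm] using h)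
    · rw [h0 z h, abs_zero]
      exact abs_nonneg _
  · refine ⟨0, fun z => ?_⟩
    rw [h0 z (lt_of_lt_of_le hM (norm_nonneg z)), abs_zero]

lemma divg_comp_sub {V : Euc d → Euc d} (hV : ∀ i, Differentiable ℝ (fun z => V z i))
    (m : Euc d) (x : Euc d) : divg (fun y => V (y - m)) x = divg V (x - m) := by
  unfold divg
  exact Finset.sum_congr rfl fun i _ => pd_comp_sub (hV i) m i x

lemma lap_comp_sub {g : Euc d → ℝ} (hg : ContDiff ℝ 2 g) (m : Euc d) (x : Euc d) :
    lap (fun y => g (y - m)) x = lap g (x - m) := by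
  unfold lap
  refine Finset.sum_congr rfl fun i _ => ?_
  have h1 : (fun y => pd (fun w => g (w - m)) i y) = fun y => pd g i (y - m) := by
    funext y
    exact pd_comp_sub (hg.differentiable (by norm_num)) m i y
  rw [h1]
  exact pd_comp_sub ((contDiff_pd (m := 1) hg (by norm_num) i).differentiable one_ne_zero) m i x

lemma cutoff_master_bound {φ : ℝ → ℝ} {Cφ R : ℝ} (hφ : IsCutoff φ Cφ) (hR : 0 < R)
    (ε lam sig : ℝ) :
    ∃ K' : ℝ, ∀ z : Euc d,
      |lam * divg (fun y : Euc d => φ (‖y‖ / R) • y) z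
        + sig ^ 2 / 2 * lap (fun y : Euc d => ‖φ (‖y‖ / R) • y‖ ^ 2 + ε ^ 2) z| ≤ K' := by
  set H : Euc d → Euc d := fun y => φ (‖y‖ / R) • y with hH
  set A : Euc d → ℝ := fun y => ‖H y‖ ^ 2 + ε ^ 2 with hA
  have hHc : ContDiff ℝ 2 H := cutoffH_contDiff hφ hR
  have hAc : ContDiff ℝ 2 A := (ContDiff.norm_sq ℝ hHc).add contDiff_const
  have hHi : ∀ i : Fin d, ContDiff ℝ 2 (fun z => H z i) := by
    intro i
    exact (EuclideanSpace.proj (𝕜 := ℝ) i).contDiff.comp hHc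
  -- continuity of the combination
  have hcont : Continuous (fun z : Euc d => lam * divg H z + sig ^ 2 / 2 * lap A z) := by
    apply Continuous.add
    · apply continuous_const.mul
      apply continuous_finset_sum
      intro i _
      exact (contDiff_pd (m := 1) (hHi i) (by norm_num) i).continuous
    · apply continuous_const.mul
      apply continuous_finset_sum
      intro i _
      exact (contDiff_pd (m := 0) (contDiff_pd (m := 1) hAc (by norm_num) i) (by norm_num) i).continuous
  -- vanishing outside the ball of radius 2R
  have hU : IsOpen {y : Euc d | 2 * R < ‖y‖} := isOpen_lt continuous_const continuous_norm
  have hvan : ∀ z : Euc d, 2 * R < ‖z‖ →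
      lam * divg H z + sig ^ 2 / 2 * lap A z = 0 := by
    intro z hz
    have hmem : {y : Euc d | 2 * R < ‖y‖} ∈ nhds z := hU.mem_nhds hz
    have hH0 : ∀ i : Fin d, (fun y : Euc d => H y i) =ᶠ[nhds z] (fun _ => (0:ℝ)) := by
      intro i
      filter_upwards [hmem] with y hy
      rw [show H y = 0 from cutoffH_eq_zero hφ hR (le_of_lt hy)]
      rfl
    have hdiv : divg H z = 0 := by
      unfold divg
      refine Finset.sum_eq_zero fun i _ => ?_
      rw [pd_congr (hH0 i) i, pd_const]
    have hpdA : ∀ i : Fin d, ∀ y : Euc d, 2 * R < ‖y‖ → pd A i y = 0 := by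
      intro i y hy
      have hAev : A =ᶠ[nhds y] (fun _ => ε ^ 2) := by
        filter_upwards [hU.mem_nhds hy] with w hw
        simp only [hA, show H w = 0 from cutoffH_eq_zero hφ hR (le_of_lt hw)]
        simp
      rw [pd_congr hAev i, pd_const]
    have hlap : lap A z = 0 := by
      unfold lap
      refine Finset.sum_eq_zero fun i _ => ?_
      have hev : (fun y => pd A i y) =ᶠ[nhds z] (fun _ => (0:ℝ)) := by
        filter_upwards [hmem] with y hy
        exact hpdA i y hy
      rw [pd_congr hev i, pd_const]
    rw [hdiv, hlap]
    ring
  exact bounded_of_vanish hcont hvan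

end AuxMaxPrinciple

set_option maxHeartbeats 2000000 in
/-- nonnegativity of solutions to the regularized equation. -/
theorem stmt2 (d : ℕ) (hd : 1 ≤ d) (lam sig α T ε R : ℝ)
    (hlam : 0 < lam) (hsig : 0 < sig) (hα : 0 < α) (hT : 0 < T) (hε : 0 < ε) (hR : 0 < R)
    (f : Euc d → ℝ) (Lf s cl cu c0 l : ℝ) (hf : AssumptionA f Lf s cl cu c0 l)
    (φ : ℝ → ℝ) (Cφ : ℝ) (hφ : IsCutoff φ Cφ)
    (ρ : ℝ → Euc d → ℝ)
    (hsmooth : ContDiff ℝ (⊤ : ℕ∞) (fun q : ℝ × Euc d => ρ q.1 q.2))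
    (hdecay : PolyDecay T ρ)
    (hposint : ∀ t ∈ Set.Icc (0:ℝ) T, 0 < ∫ x, Real.exp (-α * f x) * ρ t x)
    (hpde : ∀ t ∈ Set.Icc (0:ℝ) T, ∀ x : Euc d,
      deriv (fun s => ρ s x) t =
        lam * divg (fun y => ρ t y • hfun α f φ R (ρ t) y) x
        + sig ^ 2 / 2 * lap (fun y => (‖hfun α f φ R (ρ t) y‖ ^ 2 + ε ^ 2) * ρ t y) x)
    (h0 : ∀ x, 0 ≤ ρ 0 x) :
    ∀ t ∈ Set.Icc (0:ℝ) T, ∀ x, 0 ≤ ρ t x := by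
  classical
  by_contra hcon
  push_neg at hcon
  obtain ⟨t₀, ht₀, x₀, hx₀⟩ := hcon
  set H : Euc d → Euc d := fun z => φ (‖z‖ / R) • z with hHdef
  set A : Euc d → ℝ := fun z => ‖H z‖ ^ 2 + ε ^ 2 with hAdef
  obtain ⟨K', hK'⟩ := cutoff_master_bound (d := d) hφ hR ε lam sig
  set K : ℝ := |K'| + 1 with hKdef
  have hKpos : 0 < K := by positivity
  set v : ℝ × Euc d → ℝ := fun q => Real.exp (-K * q.1) * ρ q.1 q.2 with hvdef
  have hvcont : Continuous v :=
    (Real.continuous_exp.comp (continuous_const.mul continuous_fst)).mul hsmooth.continuous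
  have hv₀ : v (t₀, x₀) < 0 := by
    have : 0 < Real.exp (-K * t₀) := Real.exp_pos _
    exact mul_neg_of_pos_of_neg this hx₀
  -- decay bound : ‖x‖ * |ρ t x| ≤ C
  obtain ⟨C, hC⟩ := hdecay.1 0 (by norm_num) 1
  have hC' : ∀ t ∈ Set.Icc (0:ℝ) T, ∀ x : Euc d, ‖x‖ * |ρ t x| ≤ C := by
    intro t ht x
    have := hC t ht x
    simpa [norm_iteratedFDeriv_zero] using this
  set M : ℝ := max ‖x₀‖ (C / (-(v (t₀, x₀))) + 1) with hMdef
  have hCnn : 0 ≤ C := le_trans (by positivity) (hC' t₀ ht₀ x₀)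
  have hMx₀ : ‖x₀‖ ≤ M := le_max_left _ _
  have houter : ∀ t ∈ Set.Icc (0:ℝ) T, ∀ x : Euc d, M < ‖x‖ → v (t₀, x₀) < v (t, x) := by
    intro t ht x hx
    have hxpos : 0 < ‖x‖ := by
      have h1 : (0:ℝ) < C / (-(v (t₀, x₀))) + 1 := by
        have : (0:ℝ) ≤ C / (-(v (t₀, x₀))) := div_nonneg hCnn (by linarith)
        linarith
      exact lt_of_lt_of_le (lt_of_lt_of_le h1 (le_max_right _ _)) hx.le
    have hvle : |v (t, x)| ≤ |ρ t x| := by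
      have he : Real.exp (-K * t) ≤ 1 := by
        apply Real.exp_le_one_iff.mpr
        nlinarith [ht.1]
      calc |v (t, x)| = Real.exp (-K * t) * |ρ t x| := by
            rw [hvdef]; simp [abs_mul, abs_of_pos (Real.exp_pos (-K * t))]
        _ ≤ 1 * |ρ t x| := by
            apply mul_le_mul_of_nonneg_right he (abs_nonneg _)
        _ = |ρ t x| := one_mul _
    have hkey : ‖x‖ * (-(v (t₀, x₀))) > C := by
      have h2 : C / (-(v (t₀, x₀))) < ‖x‖ := by
        calc C / (-(v (t₀, x₀))) < C / (-(v (t₀, x₀))) + 1 := by linarith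
          _ ≤ M := le_max_right _ _
          _ < ‖x‖ := hx
      calc C = (C / (-(v (t₀, x₀)))) * (-(v (t₀, x₀))) :=
            (div_mul_cancel₀ C (by linarith : -(v (t₀, x₀)) ≠ 0)).symm
        _ < ‖x‖ * (-(v (t₀, x₀))) := by
            apply mul_lt_mul_of_pos_right h2
            linarith
    have : |v (t, x)| * ‖x‖ < ‖x‖ * (-(v (t₀, x₀))) :=
      lt_of_le_of_lt (by
        calc |v (t, x)| * ‖x‖ ≤ |ρ t x| * ‖x‖ :=
              mul_le_mul_of_nonneg_right hvle (norm_nonneg _)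
          _ = ‖x‖ * |ρ t x| := mul_comm _ _
          _ ≤ C := hC' t ht x) hkey
    have h3 : |v (t, x)| < -(v (t₀, x₀)) := by
      have := lt_of_mul_lt_mul_right (by linarith [this] : |v (t, x)| * ‖x‖ < (-(v (t₀, x₀))) * ‖x‖) hxpos.le
      exact this
    linarith [neg_abs_le (v (t, x))]
  -- compact minimum
  set S : Set (ℝ × Euc d) := Set.Icc (0:ℝ) T ×ˢ Metric.closedBall (0 : Euc d) M with hSdef
  have hScomp : IsCompact S := isCompact_Icc.prod (isCompact_closedBall _ _)
  have hSne : S.Nonempty := ⟨(t₀, x₀), ht₀, by simpa [Metric.mem_closedBall, dist_eq_norm] using hMx₀⟩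
  obtain ⟨⟨t₁, x₁⟩, hq₁S, hq₁min⟩ := hScomp.exists_isMinOn hSne hvcont.continuousOn
  have ht₁ : t₁ ∈ Set.Icc (0:ℝ) T := hq₁S.1
  have hmin₀ : v (t₁, x₁) ≤ v (t₀, x₀) := hq₁min ⟨ht₀, by simpa [Metric.mem_closedBall, dist_eq_norm] using hMx₀⟩
  have hglob : ∀ t ∈ Set.Icc (0:ℝ) T, ∀ x : Euc d, v (t₁, x₁) ≤ v (t, x) := by
    intro t ht x
    rcases le_or_gt ‖x‖ M with h | h
    · exact hq₁min ⟨ht, by simpa [Metric.mem_closedBall, dist_eq_norm] using h⟩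
    · exact le_of_lt (lt_of_le_of_lt hmin₀ (houter t ht x h))
  have hv₁ : v (t₁, x₁) < 0 := lt_of_le_of_lt hmin₀ hv₀
  have hρ₁ : ρ t₁ x₁ < 0 := by
    by_contra h
    push_neg at h
    have : 0 ≤ v (t₁, x₁) := mul_nonneg (Real.exp_pos _).le h
    linarith
  have ht₁pos : 0 < t₁ := by
    rcases lt_or_eq_of_le ht₁.1 with h | h
    · exact h
    · exfalso
      have : v (t₁, x₁) = ρ 0 x₁ := by
        rw [hvdef, ← h]; simp
      linarith [h0 x₁]
  -- notation
  set r : Euc d → ℝ := ρ t₁ with hrdef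
  have hr : ContDiff ℝ (⊤ : ℕ∞) r := hsmooth.comp ((contDiff_const (c := t₁)).prodMk contDiff_id)
  have hr2 : ContDiff ℝ 2 r := hr.of_le (WithTop.coe_le_coe.mpr (le_top : (2:ℕ∞) ≤ ⊤))
  have hrd : Differentiable ℝ r := hr2.differentiable (by norm_num)
  set m : Euc d := mDensity α f (ρ t₁) with hmdef
  -- spatial minimum facts
  have hxmin : ∀ x : Euc d, r x₁ ≤ r x := by
    intro x
    have h1 := hglob t₁ ht₁ x
    rw [hvdef] at h1
    simp only at h1
    have he : 0 < Real.exp (-K * t₁) := Real.exp_pos _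
    exact le_of_mul_le_mul_left h1 he
  have hfz : fderiv ℝ r x₁ = 0 :=
    ((isMinOn_univ_iff.mpr hxmin).isLocalMin Filter.univ_mem).fderiv_eq_zero
  have hgrad : ∀ i : Fin d, pd r i x₁ = 0 := by
    intro i
    unfold pd
    rw [hfz]
    rfl
  have hsec : ∀ i : Fin d, 0 ≤ pd (fun y => pd r i y) i x₁ := by
    intro i
    set e : Euc d := EuclideanSpace.single i (1:ℝ) with hedef
    set c : ℝ → Euc d := fun s => x₁ + s • e with hcdef
    have hc : ∀ s : ℝ, HasDerivAt c e s := by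
      intro s
      have h1 : HasDerivAt (fun s : ℝ => s • e) ((1:ℝ) • e) s :=
        (hasDerivAt_id s).smul_const e
      simpa [hcdef, one_smul] using h1.const_add x₁
    have hc0 : c 0 = x₁ := by simp [hcdef]
    set g : ℝ → ℝ := fun s => r (c s) with hgdef
    have hderiv_g : ∀ s, HasDerivAt g (pd r i (c s)) s := by
      intro s
      exact ((hrd (c s)).hasFDerivAt).comp_hasDerivAt s (hc s)
    have hgdiff : Differentiable ℝ g := fun s => (hderiv_g s).differentiableAt
    have hdg : deriv g = fun s => pd r i (c s) := funext fun s => (hderiv_g s).deriv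
    have hpdr : Differentiable ℝ (pd r i) :=
      (contDiff_pd (m := 1) hr2 (by norm_num) i).differentiable one_ne_zero
    have hderiv2 : HasDerivAt (fun s => pd r i (c s)) (pd (fun y => pd r i y) i (c 0)) 0 :=
      ((hpdr (c 0)).hasFDerivAt).comp_hasDerivAt 0 (hc 0)
    have h2d : DifferentiableAt ℝ (deriv g) 0 := by
      rw [hdg]; exact hderiv2.differentiableAt
    have hmin : ∀ s, g 0 ≤ g s := by
      intro s
      rw [hgdef]
      simp only [hc0]
      exact hxmin (c s)
    have h0le := second_deriv_test hgdiff h2d hmin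
    have : deriv (deriv g) 0 = pd (fun y => pd r i y) i x₁ := by
      rw [hdg, hderiv2.deriv, hc0]
    linarith [this ▸ h0le]
  have hlapr : 0 ≤ lap r x₁ := Finset.sum_nonneg fun i _ => hsec i
  -- time derivative at the minimum
  set tρ : ℝ → ℝ := fun s => ρ s x₁ with htρdef
  have htρ : ContDiff ℝ (⊤ : ℕ∞) tρ := hsmooth.comp (contDiff_id.prodMk (contDiff_const (c := x₁)))
  have htρd : Differentiable ℝ tρ := htρ.differentiable (by simp)
  set F : ℝ → ℝ := fun s => Real.exp (-K * s) * tρ s with hFdef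
  have hFv : ∀ s, F s = v (s, x₁) := fun s => rfl
  set dert : ℝ := deriv tρ t₁ with hdert
  have hF' : HasDerivAt F (Real.exp (-K * t₁) * -K * tρ t₁ + Real.exp (-K * t₁) * dert) t₁ := by
    have hexp : HasDerivAt (fun s : ℝ => Real.exp (-K * s)) (Real.exp (-K * t₁) * -K) t₁ := by
      have h1 : HasDerivAt (fun s : ℝ => -K * s) (-K) t₁ := by
        simpa using (hasDerivAt_id t₁).const_mul (-K)
      exact h1.exp
    exact hexp.mul (htρd t₁).hasDerivAt
  have hL_le : Real.exp (-K * t₁) * -K * tρ t₁ + Real.exp (-K * t₁) * dert ≤ 0 := by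
    have htends : Tendsto (slope F t₁) (nhdsWithin t₁ {t₁}ᶜ)
        (nhds (Real.exp (-K * t₁) * -K * tρ t₁ + Real.exp (-K * t₁) * dert)) :=
      hasDerivAt_iff_tendsto_slope.mp hF'
    have htends' : Tendsto (slope F t₁) (nhdsWithin t₁ (Set.Iio t₁))
        (nhds (Real.exp (-K * t₁) * -K * tρ t₁ + Real.exp (-K * t₁) * dert)) :=
      htends.mono_left (nhdsWithin_mono t₁ (fun s hs => ne_of_lt hs))
    have hev : ∀ᶠ s in nhdsWithin t₁ (Set.Iio t₁), slope F t₁ s ≤ 0 := by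
      have hIoi : Set.Ioi (0:ℝ) ∈ nhdsWithin t₁ (Set.Iio t₁) :=
        mem_nhdsWithin_of_mem_nhds (isOpen_Ioi.mem_nhds ht₁pos)
      filter_upwards [self_mem_nhdsWithin, hIoi] with s hs hspos
      have hsIcc : s ∈ Set.Icc (0:ℝ) T := ⟨le_of_lt hspos, le_trans (le_of_lt hs) ht₁.2⟩
      have hFs : F t₁ ≤ F s := by
        rw [hFv, hFv]
        exact hglob s hsIcc x₁
      rw [slope_def_field]
      apply div_nonpos_of_nonneg_of_nonpos
      · linarith
      · linarith [Set.mem_Iio.mp hs]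
    exact le_of_tendsto htends' hev
  have hdert_le : dert ≤ K * ρ t₁ x₁ := by
    have he : 0 < Real.exp (-K * t₁) := Real.exp_pos _
    have htr : tρ t₁ = ρ t₁ x₁ := rfl
    rw [htr] at hL_le
    nlinarith [hL_le, he]
  -- use the PDE
  have hpde₁ := hpde t₁ ht₁ x₁
  have hhfun : ∀ y : Euc d, hfun α f φ R (ρ t₁) y = H (y - m) := fun y => rfl
  -- divergence term
  have hHc : ContDiff ℝ 2 H := cutoffH_contDiff hφ hR
  have hHd : ∀ i : Fin d, Differentiable ℝ (fun z : Euc d => H z i) := by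
    intro i
    exact ((EuclideanSpace.proj (𝕜 := ℝ) i).contDiff.comp hHc).differentiable (by norm_num)
  have hHmd : ∀ i : Fin d, Differentiable ℝ (fun y : Euc d => H (y - m) i) := by
    intro i
    exact (hHd i).comp (differentiable_id.sub_const m)
  have hdivg : divg (fun y => ρ t₁ y • hfun α f φ R (ρ t₁) y) x₁
      = ρ t₁ x₁ * divg H (x₁ - m) := by
    have heq : (fun y => ρ t₁ y • hfun α f φ R (ρ t₁) y) = fun y => r y • H (y - m) := by
      funext y; rw [hhfun]
    rw [heq]
    have h1 : divg (fun y => r y • H (y - m)) x₁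
        = ∑ i, (pd r i x₁ * H (x₁ - m) i + r x₁ * pd (fun y => H (y - m) i) i x₁) := by
      unfold divg
      refine Finset.sum_congr rfl fun i _ => ?_
      have h2 : (fun y => (r y • H (y - m)) i) = fun y => r y * H (y - m) i := by
        funext y
        simp [PiLp.smul_apply, smul_eq_mul]
      rw [h2]
      exact pd_mul (hrd x₁) ((hHmd i) x₁) i
    rw [h1]
    have h3 : ∀ i : Fin d, pd r i x₁ * H (x₁ - m) i + r x₁ * pd (fun y => H (y - m) i) i x₁
        = r x₁ * pd (fun y => H (y - m) i) i x₁ := by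
      intro i; rw [hgrad i]; ring
    rw [Finset.sum_congr rfl fun i _ => h3 i, ← Finset.mul_sum]
    have h4 : ∑ i, pd (fun y => H (y - m) i) i x₁ = divg H (x₁ - m) := by
      have := divg_comp_sub (V := H) hHd m x₁
      unfold divg at this ⊢
      exact this
    rw [h4]
  -- laplacian term
  have hAc : ContDiff ℝ 2 A := (ContDiff.norm_sq ℝ hHc).add contDiff_const
  set A' : Euc d → ℝ := fun y => A (y - m) with hA'def
  have hA'c : ContDiff ℝ 2 A' := hAc.comp (contDiff_id.sub contDiff_const)
  have hA'd : Differentiable ℝ A' := hA'c.differentiable (by norm_num)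
  have hpdA' : ∀ i, Differentiable ℝ (pd A' i) := fun i =>
    (contDiff_pd (m := 1) hA'c (by norm_num) i).differentiable one_ne_zero
  have hpdr : ∀ i, Differentiable ℝ (pd r i) := fun i =>
    (contDiff_pd (m := 1) hr2 (by norm_num) i).differentiable one_ne_zero
  have hlapG : lap (fun y => (‖hfun α f φ R (ρ t₁) y‖ ^ 2 + ε ^ 2) * ρ t₁ y) x₁
      = lap A (x₁ - m) * ρ t₁ x₁ + A (x₁ - m) * lap r x₁ := by
    have heq : (fun y => (‖hfun α f φ R (ρ t₁) y‖ ^ 2 + ε ^ 2) * ρ t₁ y)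
        = fun y => A' y * r y := by
      funext y; rw [hhfun]
    rw [heq]
    have hstep1 : ∀ i : Fin d, (fun y => pd (fun w => A' w * r w) i y)
        = fun y => pd A' i y * r y + A' y * pd r i y := by
      intro i
      funext y
      exact pd_mul (hA'd y) (hrd y) i
    have hstep2 : ∀ i : Fin d, pd (fun y => pd (fun w => A' w * r w) i y) i x₁
        = pd (fun y => pd A' i y) i x₁ * r x₁ + A' x₁ * pd (fun y => pd r i y) i x₁ := by
      intro i
      rw [hstep1 i]
      rw [pd_add (u := fun y => pd A' i y * r y) (w := fun y => A' y * pd r i y) (((hpdA' i) x₁).mul (hrd x₁)) ((hA'd x₁).mul ((hpdr i) x₁)) i]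
      rw [pd_mul ((hpdA' i) x₁) (hrd x₁) i, pd_mul (hA'd x₁) ((hpdr i) x₁) i]
      rw [hgrad i]
      ring
    unfold lap
    rw [Finset.sum_congr rfl fun i _ => hstep2 i]
    rw [Finset.sum_add_distrib, ← Finset.sum_mul, ← Finset.mul_sum]
    have h4 : ∑ i, pd (fun y => pd A' i y) i x₁ = ∑ i, pd (fun y => pd A i y) i (x₁ - m) := by
      have := lap_comp_sub hAc m x₁
      unfold lap at this
      exact this
    rw [h4]
  -- combine
  rw [hdivg, hlapG] at hpde₁
  have hdert_eq : dert = deriv (fun s => ρ s x₁) t₁ := rfl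
  rw [← hdert_eq] at hpde₁
  set z₁ : Euc d := x₁ - m with hz₁def
  have hB := hK' z₁
  have hApos : 0 ≤ A z₁ := by
    rw [hAdef]
    positivity
  have hBexpand : lam * divg H z₁ + sig ^ 2 / 2 * lap A z₁ ≤ |K'| := by
    calc lam * divg H z₁ + sig ^ 2 / 2 * lap A z₁
        ≤ |lam * divg H z₁ + sig ^ 2 / 2 * lap A z₁| := le_abs_self _
      _ ≤ K' := hB
      _ ≤ |K'| := le_abs_self _
  have hlow : ρ t₁ x₁ * (lam * divg H z₁ + sig ^ 2 / 2 * lap A z₁) ≤ dert := by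
    rw [hpde₁]
    have h5 : 0 ≤ sig ^ 2 / 2 * (A z₁ * lap r x₁) :=
      mul_nonneg (by positivity) (mul_nonneg hApos hlapr)
    nlinarith [h5]
  have hup : ρ t₁ x₁ * |K'| ≤ ρ t₁ x₁ * (lam * divg H z₁ + sig ^ 2 / 2 * lap A z₁) := by
    have h6 := mul_nonneg (neg_nonneg.mpr hρ₁.le) (sub_nonneg.mpr hBexpand)
    nlinarith [h6]
  rw [hKdef] at hdert_le
  nlinarith [hlow, hup, hdert_le, hρ₁]

end
end

section
/- Let d ≥ 1, λ, σ > 0, T > 0, and let m : [0,T] → ℝ^d be continuous. Let ρ̄ : [0,T] × ℝ^d → ℝ be smooth, with ρ̄, ∂_t ρ̄ and all spatial derivatives of ρ̄ up to fourth order decaying faster than any polynomial in x uniformly for t ∈ [0,T], and suppose ρ̄ satisfies pointwise the linear equation ∂_t ρ̄ = λ ∇_x·((x − m(t)) ρ̄) + (σ²/2) Δ_x(|x − m(t)|² ρ̄). Then for all t ∈ [0,T], ‖ρ̄(t,·)‖_{L²(ℝ^d)} ≤ e^{(d/2)(λ+σ²) t} ‖ρ̄(0,·)‖_{L²(ℝ^d)}.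 In particular, if ρ̄(0,·) ≡ 0 then ρ̄ ≡ 0 on [0,T] × ℝ^d. -/
open MeasureTheory Real Filter
open scoped ENNReal RealInnerProductSpace

noncomputable section

namespace Stmt14Aux
variable {d : ℕ}

lemma one_add_pow_le (a : ℝ) (ha : 0 ≤ a) (n : ℕ) : (1+a)^n ≤ 2^n * (1 + a^n) := by
  have h1 : (1+a) ≤ 2 * max 1 a := by
    rcases le_total a 1 with h|h
    · rw [max_eq_left h]; linarith
    · rw [max_eq_right h]; linarith
  calc (1+a)^n ≤ (2*max 1 a)^n := by
        apply pow_le_pow_left₀ (by linarith) h1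
    _ = 2^n * (max 1 a)^n := mul_pow _ _ _
    _ ≤ 2^n * (1 + a^n) := by
        have : (max 1 a)^n ≤ 1 + a^n := by
          rcases le_total a 1 with h|h
          · rw [max_eq_left h]; rw [one_pow]; nlinarith [pow_nonneg ha n]
          · rw [max_eq_right h]; nlinarith [pow_nonneg ha n]
        have h2 : (0:ℝ) ≤ 2^n := by positivity
        nlinarith [pow_nonneg ha n]

/-- Rapid decay. -/
def Dec (f : Euc d → ℝ) : Prop := ∀ n : ℕ, ∃ C : ℝ, ∀ x : Euc d, (1+‖x‖)^n * |f x| ≤ C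

/-- Polynomial growth. -/
def PG (f : Euc d → ℝ) : Prop := ∃ k : ℕ, ∃ C : ℝ, ∀ x : Euc d, |f x| ≤ C * (1+‖x‖)^k

lemma integrable_of_bound (f : Euc d → ℝ) (hc : Continuous f)
    (h : ∃ C, ∀ x : Euc d, (1+‖x‖)^(d+1) * |f x| ≤ C) : Integrable f := by
  obtain ⟨C, hC⟩ := h
  have base : Integrable (fun x : Euc d => (1 + ‖x‖) ^ (-((d:ℝ)+1))) := by
    apply integrable_one_add_norm
    rw [finrank_euclideanSpace, Fintype.card_fin]
    linarith
  refine (base.const_mul C).mono' hc.aestronglyMeasurable (Eventually.of_forall fun x => ?_)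
  have h1 : (0:ℝ) < (1+‖x‖)^(d+1) := by positivity
  have h2 : ((1:ℝ)+‖x‖) ^ (-((d:ℝ)+1)) = ((1+‖x‖)^(d+1))⁻¹ := by
    rw [← Real.rpow_natCast (1+‖x‖) (d+1), ← Real.rpow_neg (by positivity)]
    push_cast; ring_nf
  rw [Real.norm_eq_abs, h2, ← div_eq_mul_inv, le_div_iff₀ h1, mul_comm]
  exact hC x


lemma PG.nonneg_const {f : Euc d → ℝ} {k : ℕ} {C : ℝ} (h : ∀ x : Euc d, |f x| ≤ C * (1+‖x‖)^k)
    [Nonempty (Euc d)] : 0 ≤ C := by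
  obtain ⟨x⟩ := ‹Nonempty (Euc d)›
  have h1 : (0:ℝ) < (1+‖x‖)^k := by positivity
  nlinarith [abs_nonneg (f x), h x]

lemma Dec.mul_pg {f g : Euc d → ℝ} (hf : Dec f) (hg : PG g) : Dec (fun x => f x * g x) := by
  intro n
  obtain ⟨k, C, hgk⟩ := hg
  obtain ⟨C', hfn⟩ := hf (n+k)
  have hC : 0 ≤ C := PG.nonneg_const hgk
  refine ⟨C' * C, fun x => ?_⟩
  have h1 : (0:ℝ) ≤ 1 + ‖x‖ := by positivity
  calc (1+‖x‖)^n * |f x * g x| = ((1+‖x‖)^n * |f x|) * |g x| := by rw [abs_mul]; ring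
    _ ≤ ((1+‖x‖)^n * |f x|) * (C * (1+‖x‖)^k) := by
        apply mul_le_mul_of_nonneg_left (hgk x) (by positivity)
    _ = ((1+‖x‖)^(n+k) * |f x|) * C := by rw [pow_add]; ring
    _ ≤ C' * C := mul_le_mul_of_nonneg_right (hfn x) hC

lemma Dec.add {f g : Euc d → ℝ} (hf : Dec f) (hg : Dec g) : Dec (fun x => f x + g x) := by
  intro n
  obtain ⟨C1, h1⟩ := hf n
  obtain ⟨C2, h2⟩ := hg n
  refine ⟨C1 + C2, fun x => ?_⟩
  have := h1 x; have := h2 x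
  have habs : |f x + g x| ≤ |f x| + |g x| := abs_add_le _ _
  have hp : (0:ℝ) ≤ (1+‖x‖)^n := by positivity
  nlinarith

lemma Dec.const_mul {f : Euc d → ℝ} (hf : Dec f) (a : ℝ) : Dec (fun x => a * f x) := by
  intro n
  obtain ⟨C, h⟩ := hf n
  refine ⟨|a| * C, fun x => ?_⟩
  have := h x
  have hp : (0:ℝ) ≤ (1+‖x‖)^n := by positivity
  rw [abs_mul]
  nlinarith [abs_nonneg (f x), abs_nonneg a]

lemma Dec.pg {f : Euc d → ℝ} (hf : Dec f) : PG f := by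
  obtain ⟨C, h⟩ := hf 0
  exact ⟨0, C, fun x => by simpa using h x⟩

lemma PG.mul {f g : Euc d → ℝ} (hf : PG f) (hg : PG g) : PG (fun x => f x * g x) := by
  obtain ⟨k1, C1, h1⟩ := hf
  obtain ⟨k2, C2, h2⟩ := hg
  have hC1 : 0 ≤ C1 := PG.nonneg_const h1
  have hC2 : 0 ≤ C2 := PG.nonneg_const h2
  refine ⟨k1+k2, C1*C2, fun x => ?_⟩
  have hp1 : (0:ℝ) ≤ (1+‖x‖)^k1 := by positivity
  have hp2 : (0:ℝ) ≤ (1+‖x‖)^k2 := by positivity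
  rw [abs_mul, pow_add]
  calc |f x| * |g x| ≤ (C1 * (1+‖x‖)^k1) * (C2 * (1+‖x‖)^k2) := by
        apply mul_le_mul (h1 x) (h2 x) (abs_nonneg _) (by positivity)
    _ = C1 * C2 * ((1+‖x‖)^k1 * (1+‖x‖)^k2) := by ring

lemma PG.add {f g : Euc d → ℝ} (hf : PG f) (hg : PG g) : PG (fun x => f x + g x) := by
  obtain ⟨k1, C1, h1⟩ := hf
  obtain ⟨k2, C2, h2⟩ := hg
  have hC1 : 0 ≤ C1 := PG.nonneg_const h1
  have hC2 : 0 ≤ C2 := PG.nonneg_const h2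
  refine ⟨k1+k2, C1+C2, fun x => ?_⟩
  have hb : (1:ℝ) ≤ 1 + ‖x‖ := by simp [norm_nonneg]
  have e1 : (1+‖x‖:ℝ)^k1 ≤ (1+‖x‖)^(k1+k2) := pow_le_pow_right₀ hb (by omega)
  have e2 : (1+‖x‖:ℝ)^k2 ≤ (1+‖x‖)^(k1+k2) := pow_le_pow_right₀ hb (by omega)
  have := h1 x; have := h2 x
  have habs : |f x + g x| ≤ |f x| + |g x| := abs_add_le _ _
  nlinarith

lemma PG.const (c : ℝ) : PG (fun _ : Euc d => c) :=
  ⟨0, |c|, fun x => by simp⟩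

lemma PG.coord (i : Fin d) (c : ℝ) : PG (fun x : Euc d => x i - c) := by
  refine ⟨1, 1 + |c|, fun x => ?_⟩
  have h1 : |x i| ≤ ‖x‖ := by
    have h := abs_real_inner_le_norm (EuclideanSpace.single i (1:ℝ)) x
    rw [EuclideanSpace.inner_single_left, EuclideanSpace.norm_single] at h
    simpa using h
  have := abs_sub_abs_le_abs_sub (x i) c
  have habs : |x i - c| ≤ |x i| + |c| := abs_sub _ _
  have : (0:ℝ) ≤ ‖x‖ := norm_nonneg x
  nlinarith [abs_nonneg c]

lemma PG.normsq (c : Euc d) : PG (fun x : Euc d => ‖x - c‖^2) := by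
  refine ⟨2, (1+‖c‖)^2, fun x => ?_⟩
  have h1 : ‖x - c‖ ≤ ‖x‖ + ‖c‖ := norm_sub_le _ _
  have h2 : ‖x‖ + ‖c‖ ≤ (1+‖c‖) * (1+‖x‖) := by nlinarith [norm_nonneg x, norm_nonneg c]
  rw [abs_of_nonneg (by positivity)]
  calc ‖x - c‖^2 ≤ ((1+‖c‖) * (1+‖x‖))^2 := by nlinarith [norm_nonneg (x - c)]
    _ = (1+‖c‖)^2 * (1+‖x‖)^2 := mul_pow _ _ _

lemma Dec.integrable {f : Euc d → ℝ} (hf : Dec f) (hc : Continuous f) : Integrable f :=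
  integrable_of_bound f hc (hf (d+1))


lemma pd_congr {f g : Euc d → ℝ} (h : f = g) (i : Fin d) (x : Euc d) :
    pd f i x = pd g i x := by rw [h]

lemma pd_mul {f g : Euc d → ℝ} (hf : DifferentiableAt ℝ f x) (hg : DifferentiableAt ℝ g x)
    (i : Fin d) : pd (fun y => f y * g y) i x = pd f i x * g x + f x * pd g i x := by
  unfold pd
  rw [fderiv_fun_mul hf hg]
  simp only [ContinuousLinearMap.add_apply, ContinuousLinearMap.smul_apply, smul_eq_mul]
  ring

lemma pd_add {f g : Euc d → ℝ} (hf : DifferentiableAt ℝ f x) (hg : DifferentiableAt ℝ g x)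
    (i : Fin d) : pd (fun y => f y + g y) i x = pd f i x + pd g i x := by
  unfold pd
  rw [fderiv_fun_add hf hg]
  simp

lemma pd_const_mul {f : Euc d → ℝ} (hf : DifferentiableAt ℝ f x) (a : ℝ)
    (i : Fin d) : pd (fun y => a * f y) i x = a * pd f i x := by
  unfold pd
  rw [fderiv_const_mul hf]
  simp

lemma contDiff_coord_sub (i : Fin d) (c : ℝ) : ContDiff ℝ (⊤ : ℕ∞) (fun y : Euc d => y i - c) := by
  have : (fun y : Euc d => y i - c) = fun y => (EuclideanSpace.proj (𝕜 := ℝ) i) y - c := rfl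
  rw [this]
  exact ((EuclideanSpace.proj (𝕜 := ℝ) i).contDiff).sub contDiff_const

lemma pd_coord_sub (i j : Fin d) (c : ℝ) (x : Euc d) :
    pd (fun y : Euc d => y i - c) j x = if i = j then 1 else 0 := by
  unfold pd
  have h : (fun y : Euc d => y i - c) = fun y => (EuclideanSpace.proj (𝕜 := ℝ) i) y - c := rfl
  rw [h, fderiv_sub_const, ContinuousLinearMap.fderiv]
  show (EuclideanSpace.single j (1:ℝ)) i = _
  rw [EuclideanSpace.single_apply]

lemma contDiff_normsq (c : Euc d) : ContDiff ℝ (⊤ : ℕ∞) (fun y : Euc d => ‖y - c‖^2) :=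
  ContDiff.norm_sq (𝕜 := ℝ) (contDiff_id.sub contDiff_const)

lemma pd_normsq (c : Euc d) (i : Fin d) (x : Euc d) :
    pd (fun y : Euc d => ‖y - c‖^2) i x = 2 * (x i - c i) := by
  unfold pd
  have hd : HasFDerivAt (fun y : Euc d => y - c) (ContinuousLinearMap.id ℝ (Euc d)) x :=
    (hasFDerivAt_id x).sub_const c
  have h := hd.norm_sq
  rw [h.fderiv]
  simp only [ContinuousLinearMap.smul_apply, ContinuousLinearMap.comp_apply,
    ContinuousLinearMap.coe_id', id_eq, innerSL_apply_apply]
  rw [EuclideanSpace.inner_single_right]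
  simp [PiLp.sub_apply]

lemma contDiff_pd {g : Euc d → ℝ} (hg : ContDiff ℝ (⊤ : ℕ∞) g) (i : Fin d) :
    ContDiff ℝ (⊤ : ℕ∞) (pd g i) := by
  have : pd g i = fun x => (fderiv ℝ g x) (EuclideanSpace.single i 1) := rfl
  rw [this]
  exact (hg.fderiv_right (by simp)).clm_apply contDiff_const

lemma abs_pd_le {g : Euc d → ℝ} (hg : Differentiable ℝ g) (i : Fin d) (x : Euc d) :
    |pd g i x| ≤ ‖iteratedFDeriv ℝ 1 g x‖ := by
  have h1 : ‖iteratedFDeriv ℝ 0 (fderiv ℝ g) x‖ = ‖iteratedFDeriv ℝ 1 g x‖ :=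
    norm_iteratedFDeriv_fderiv
  rw [norm_iteratedFDeriv_zero] at h1
  calc |pd g i x| ≤ ‖fderiv ℝ g x‖ * ‖EuclideanSpace.single i (1:ℝ)‖ :=
        (fderiv ℝ g x).le_opNorm _
    _ = ‖fderiv ℝ g x‖ := by rw [EuclideanSpace.norm_single]; simp
    _ = ‖iteratedFDeriv ℝ 1 g x‖ := h1

lemma abs_pd_pd_le {g : Euc d → ℝ} (hg : ContDiff ℝ (⊤ : ℕ∞) g) (i j : Fin d) (x : Euc d) :
    |pd (pd g i) j x| ≤ ‖iteratedFDeriv ℝ 2 g x‖ := by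
  have hdf : DifferentiableAt ℝ (fderiv ℝ g) x :=
    ((hg.fderiv_right (m := (⊤ : ℕ∞)) (by simp)).differentiable (by simp)).differentiableAt
  have h : pd (pd g i) j x =
      ((fderiv ℝ (fderiv ℝ g) x) (EuclideanSpace.single j 1)) (EuclideanSpace.single i 1) := by
    unfold pd
    rw [fderiv_clm_apply hdf (differentiableAt_const _)]
    simp
  rw [h]
  have h2 : ‖iteratedFDeriv ℝ 1 (fderiv ℝ g) x‖ = ‖iteratedFDeriv ℝ 2 g x‖ :=
    norm_iteratedFDeriv_fderiv
  have h3 : ‖iteratedFDeriv ℝ 0 (fderiv ℝ (fderiv ℝ g)) x‖ = ‖iteratedFDeriv ℝ 1 (fderiv ℝ g) x‖ :=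
    norm_iteratedFDeriv_fderiv
  rw [norm_iteratedFDeriv_zero] at h3
  calc |((fderiv ℝ (fderiv ℝ g) x) (EuclideanSpace.single j 1)) (EuclideanSpace.single i 1)|
      ≤ ‖(fderiv ℝ (fderiv ℝ g) x) (EuclideanSpace.single j 1)‖ * ‖EuclideanSpace.single i (1:ℝ)‖ := by
        rw [← Real.norm_eq_abs]; exact ContinuousLinearMap.le_opNorm _ _
    _ ≤ (‖fderiv ℝ (fderiv ℝ g) x‖ * ‖EuclideanSpace.single j (1:ℝ)‖) * ‖EuclideanSpace.single i (1:ℝ)‖ := by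
        apply mul_le_mul_of_nonneg_right (ContinuousLinearMap.le_opNorm _ _) (norm_nonneg _)
    _ = ‖fderiv ℝ (fderiv ℝ g) x‖ := by rw [EuclideanSpace.norm_single, EuclideanSpace.norm_single]; simp
    _ ≤ ‖iteratedFDeriv ℝ 2 g x‖ := by rw [h3, h2]


lemma integral_pd_eq_zero {d : ℕ} (g : Euc d → ℝ) (hg : ContDiff ℝ (⊤ : ℕ∞) g) (i : Fin d)
    (h0 : ∃ C, ∀ x : Euc d, (1+‖x‖)^(d+1) * |g x| ≤ C)
    (h1 : ∃ C, ∀ x : Euc d, (1+‖x‖)^(d+1) * |pd g i x| ≤ C) :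
    ∫ x : Euc d, pd g i x = 0 := by
  obtain ⟨C, hC⟩ := h1
  set e : Euc d := EuclideanSpace.single i 1 with he
  have hnorme : ‖e‖ = 1 := by rw [he, EuclideanSpace.norm_single]; simp
  have hCnn : 0 ≤ C := by
    have := hC 0
    have h2 : (0:ℝ) < (1+‖(0:Euc d)‖)^(d+1) := by positivity
    nlinarith [abs_nonneg (pd g i 0)]
  set bound : Euc d → ℝ := fun x => (2^(d+1) * C) * ((1+‖x‖)^(d+1))⁻¹ with hbd
  have hgc : Continuous g := hg.continuous
  have hpdc : Continuous (pd g i) := (contDiff_pd hg i).continuous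
  have key : ∀ (s : ℝ), s ∈ Metric.ball (0:ℝ) 1 → ∀ x : Euc d,
      |pd g i (x + s • e)| ≤ bound x := by
    intro s hs x
    have hs1 : |s| < 1 := by simpa [Metric.mem_ball, Real.dist_eq] using hs
    have hxy : ‖x‖ ≤ ‖x + s • e‖ + 1 := by
      have h3 : ‖x‖ - ‖x + s • e‖ ≤ ‖x - (x + s • e)‖ := norm_sub_norm_le _ _
      have h4 : ‖x - (x + s • e)‖ = ‖s • e‖ := by rw [sub_add_cancel_left, norm_neg]
      have h5 : ‖s • e‖ = |s| := by rw [norm_smul, hnorme, Real.norm_eq_abs, mul_one]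
      linarith
    have hmono : ((1:ℝ)+‖x‖)^(d+1) ≤ 2^(d+1) * (1+‖x + s • e‖)^(d+1) := by
      have h6 : (1:ℝ)+‖x‖ ≤ 2 * (1+‖x + s • e‖) := by linarith [norm_nonneg (x + s • e)]
      calc ((1:ℝ)+‖x‖)^(d+1) ≤ (2 * (1+‖x + s • e‖))^(d+1) :=
            pow_le_pow_left₀ (by positivity) h6 _
        _ = 2^(d+1) * (1+‖x + s • e‖)^(d+1) := mul_pow _ _ _
    have hb := hC (x + s • e)
    have hpos : (0:ℝ) < (1+‖x‖)^(d+1) := by positivity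
    show |pd g i (x + s • e)| ≤ 2 ^ (d + 1) * C * ((1 + ‖x‖) ^ (d + 1))⁻¹
    rw [← div_eq_mul_inv, le_div_iff₀ hpos]
    calc |pd g i (x + s • e)| * (1+‖x‖)^(d+1)
        ≤ |pd g i (x + s • e)| * (2^(d+1) * (1+‖x + s • e‖)^(d+1)) := by
          apply mul_le_mul_of_nonneg_left hmono (abs_nonneg _)
      _ = 2^(d+1) * ((1+‖x + s • e‖)^(d+1) * |pd g i (x + s • e)|) := by ring
      _ ≤ 2^(d+1) * C := by
          apply mul_le_mul_of_nonneg_left hb (by positivity)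
  have hbound_int : Integrable bound := by
    apply integrable_of_bound _
      (continuous_const.mul (((continuous_const.add continuous_norm).pow (d+1)).inv₀
        (fun x => by simp only [Pi.pow_apply, Pi.add_apply]; positivity)))
    refine ⟨2^(d+1) * C, fun x => ?_⟩
    have hpos : (0:ℝ) < (1+‖x‖)^(d+1) := by positivity
    have : |2 ^ (d + 1) * C * ((1 + ‖x‖) ^ (d + 1))⁻¹| =
        2 ^ (d + 1) * C * ((1 + ‖x‖) ^ (d + 1))⁻¹ := abs_of_nonneg (by positivity)
    show (1+‖x‖)^(d+1) * |2 ^ (d + 1) * C * ((1 + ‖x‖) ^ (d + 1))⁻¹| ≤ _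
    rw [this]
    rw [show (1+‖x‖)^(d+1) * (2 ^ (d + 1) * C * ((1 + ‖x‖) ^ (d + 1))⁻¹) =
      2^(d+1)*C * ((1+‖x‖)^(d+1) * ((1 + ‖x‖) ^ (d + 1))⁻¹) from by ring]
    rw [mul_inv_cancel₀ (ne_of_gt hpos)]
    simp
  -- the differentiation under the integral
  have hdiff : ∀ x : Euc d, ∀ s ∈ Metric.ball (0:ℝ) 1,
      HasDerivAt (fun u : ℝ => g (x + u • e)) (pd g i (x + s • e)) s := by
    intro x s _
    have hline : HasDerivAt (fun u : ℝ => x + u • e) e s := by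
      simpa using ((hasDerivAt_id s).smul_const e).const_add x
    have hgd : HasFDerivAt g (fderiv ℝ g (x + s • e)) (x + s • e) :=
      (hg.differentiable (by simp) (x + s • e)).hasFDerivAt
    exact hgd.comp_hasDerivAt s hline
  have hmeas : ∀ᶠ s in nhds (0:ℝ), AEStronglyMeasurable (fun x : Euc d => g (x + s • e)) volume := by
    apply Eventually.of_forall
    intro s
    exact (hgc.comp (continuous_id.add continuous_const)).aestronglyMeasurable
  have hint : Integrable (fun x : Euc d => g (x + (0:ℝ) • e)) := by
    simpa using (integrable_of_bound g hgc h0)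
  have hFmeas : AEStronglyMeasurable (fun x : Euc d => pd g i (x + (0:ℝ) • e)) volume := by
    simpa using hpdc.aestronglyMeasurable
  obtain ⟨-, hH⟩ := hasDerivAt_integral_of_dominated_loc_of_deriv_le (Metric.ball_mem_nhds 0 one_pos) hmeas hint hFmeas
    (Eventually.of_forall fun x => fun s hs => by
      rw [Real.norm_eq_abs]; exact key s hs x)
    hbound_int
    (Eventually.of_forall fun x => fun s hs => hdiff x s hs)
  have hconst : (fun s : ℝ => ∫ x : Euc d, g (x + s • e)) = fun _ => ∫ x : Euc d, g x := by
    funext s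
    exact integral_add_right_eq_self g (s • e)
  have hzero : HasDerivAt (fun s : ℝ => ∫ x : Euc d, g (x + s • e)) 0 0 := by
    rw [hconst]; exact hasDerivAt_const _ _
  have := hH.unique hzero
  simpa using this


lemma polyconv {ι : Sort*} (g : ι → Euc d → ℝ)
    (h : ∀ n : ℕ, ∃ C, ∀ (i : ι) (x : Euc d), ‖x‖^n * |g i x| ≤ C) :
    ∀ n : ℕ, ∃ C, ∀ (i : ι) (x : Euc d), (1+‖x‖)^n * |g i x| ≤ C := by
  intro n
  obtain ⟨C0, h0⟩ := h 0
  obtain ⟨Cn, hn⟩ := h n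
  refine ⟨2^n * (C0 + Cn), fun i x => ?_⟩
  have hup := one_add_pow_le ‖x‖ (norm_nonneg x) n
  have h0' := h0 i x
  have hn' := hn i x
  rw [pow_zero, one_mul] at h0'
  have h2 : (0:ℝ) ≤ 2^n := by positivity
  have h3 : (0:ℝ) ≤ ‖x‖^n := by positivity
  calc (1+‖x‖)^n * |g i x| ≤ (2^n * (1 + ‖x‖^n)) * |g i x| :=
        mul_le_mul_of_nonneg_right hup (abs_nonneg _)
    _ = 2^n * (|g i x| + ‖x‖^n * |g i x|) := by ring
    _ ≤ 2^n * (C0 + Cn) := by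
        apply mul_le_mul_of_nonneg_left _ h2
        have := mul_nonneg h3 (abs_nonneg (g i x))
        linarith


lemma integrable_inv_decay (c : ℝ) :
    Integrable (fun x : Euc d => c * ((1+‖x‖)^(d+1))⁻¹) := by
  apply integrable_of_bound _
    (continuous_const.mul (((continuous_const.add continuous_norm).pow (d+1)).inv₀
      (fun x => by simp only [Pi.pow_apply, Pi.add_apply]; positivity)))
  refine ⟨|c|, fun x => ?_⟩
  have hpos : (0:ℝ) < (1+‖x‖)^(d+1) := by positivity
  show (1+‖x‖)^(d+1) * |c * ((1+‖x‖)^(d+1))⁻¹| ≤ |c|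
  rw [abs_mul, abs_of_nonneg (le_of_lt (inv_pos.mpr hpos))]
  rw [show (1+‖x‖)^(d+1) * (|c| * ((1 + ‖x‖) ^ (d + 1))⁻¹) =
    |c| * ((1+‖x‖)^(d+1) * ((1 + ‖x‖) ^ (d + 1))⁻¹) from by ring]
  rw [mul_inv_cancel₀ (ne_of_gt hpos)]
  simp

lemma Dec.congr {f g : Euc d → ℝ} (h : Dec f) (hfg : ∀ x, g x = f x) : Dec g := by
  intro n
  obtain ⟨C, hC⟩ := h n
  exact ⟨C, fun x => by rw [hfg]; exact hC x⟩

lemma Dec.finsum {ι : Type*} (s : Finset ι) (f : ι → Euc d → ℝ) (h : ∀ i ∈ s, Dec (f i)) :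
    Dec (fun x => ∑ i ∈ s, f i x) := by
  classical
  induction s using Finset.induction with
  | empty => intro n; exact ⟨0, by simp⟩
  | @insert a s hnot ih =>
      have h1 : Dec (fun x => f a x + ∑ i ∈ s, f i x) :=
        (h a (Finset.mem_insert_self a s)).add (ih (fun i hi => h i (Finset.mem_insert_of_mem hi)))
      exact h1.congr (fun x => Finset.sum_insert hnot)

lemma Dec.bound {f : Euc d → ℝ} (h : Dec f) (n : ℕ) : ∃ C, ∀ x : Euc d, (1+‖x‖)^n * |f x| ≤ C :=
  h n

end Stmt14Aux

set_option maxHeartbeats 2000000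

/-- L² estimate (and uniqueness) for the linear CBO-type equation
with a prescribed continuous consensus path. -/
theorem stmt14 (d : ℕ) (hd : 1 ≤ d) (lam sig T : ℝ) (hlam : 0 < lam) (hsig : 0 < sig)
    (hT : 0 < T) (m : ℝ → Euc d) (hm : Continuous m)
    (ρ : ℝ → Euc d → ℝ)
    (hsmooth : ContDiff ℝ (⊤ : ℕ∞) (fun q : ℝ × Euc d => ρ q.1 q.2))
    (hdecay : PolyDecay T ρ)
    (hpde : ∀ t ∈ Set.Icc (0:ℝ) T, ∀ x : Euc d,
      deriv (fun s => ρ s x) t =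
        lam * divg (fun y => ρ t y • (y - m t)) x
        + sig ^ 2 / 2 * lap (fun y => ‖y - m t‖ ^ 2 * ρ t y) x) :
    (∀ t ∈ Set.Icc (0:ℝ) T,
      Real.sqrt (∫ x, ρ t x ^ 2) ≤
        Real.exp ((d : ℝ) / 2 * (lam + sig ^ 2) * t) * Real.sqrt (∫ x, ρ 0 x ^ 2)) ∧
    ((∀ x, ρ 0 x = 0) → ∀ t ∈ Set.Icc (0:ℝ) T, ∀ x, ρ t x = 0) := by
  classical
  have hd0T : (0:ℝ) ∈ Set.Icc (0:ℝ) T := ⟨le_refl 0, hT.le⟩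
  have hxs : ∀ t : ℝ, ContDiff ℝ (⊤ : ℕ∞) (ρ t) := by
    intro t
    have h : ρ t = (fun q : ℝ × Euc d => ρ q.1 q.2) ∘ (fun x : Euc d => (t, x)) := rfl
    rw [h]
    exact hsmooth.comp (contDiff_const.prodMk contDiff_id)
  have hts : ∀ x : Euc d, ContDiff ℝ (⊤ : ℕ∞) (fun s : ℝ => ρ s x) := by
    intro x
    have h : (fun s : ℝ => ρ s x) = (fun q : ℝ × Euc d => ρ q.1 q.2) ∘ (fun s : ℝ => (s, x)) := rfl
    rw [h]
    exact hsmooth.comp (contDiff_id.prodMk contDiff_const)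
  set dt : ℝ → Euc d → ℝ := fun t x => deriv (fun s => ρ s x) t with hdtdef
  have htderiv : ∀ (t : ℝ) (x : Euc d), HasDerivAt (fun s => ρ s x) (dt t x) t := by
    intro t x
    exact ((hts x).differentiable (by simp) t).hasDerivAt
  have hdt_eq : ∀ (t : ℝ) (x : Euc d),
      dt t x = (fderiv ℝ (fun q : ℝ × Euc d => ρ q.1 q.2) (t, x)) ((1:ℝ), (0:Euc d)) := by
    intro t x
    have hline : HasDerivAt (fun s : ℝ => ((s, x) : ℝ × Euc d)) ((1:ℝ), (0:Euc d)) t :=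
      (hasDerivAt_id t).prodMk (hasDerivAt_const t x)
    have hF := (hsmooth.differentiable (by simp) (t, x)).hasFDerivAt
    exact (hF.comp_hasDerivAt t hline).deriv
  have hdtc : ∀ t : ℝ, Continuous (fun x : Euc d => dt t x) := by
    intro t
    have h1' : ContDiff ℝ (⊤:ℕ∞) (fun q : ℝ × Euc d =>
        (fderiv ℝ (fun q : ℝ × Euc d => ρ q.1 q.2) q) ((1:ℝ), (0:Euc d))) :=
      (hsmooth.fderiv_right (by simp)).clm_apply contDiff_const
    have h1 := h1'.continuous
    have h2 : Continuous (fun x : Euc d => ((t, x) : ℝ × Euc d)) := Continuous.prodMk_right t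
    have h3 : (fun x : Euc d => dt t x) = fun x : Euc d =>
        (fderiv ℝ (fun q : ℝ × Euc d => ρ q.1 q.2) (t, x)) ((1:ℝ), (0:Euc d)) :=
      funext fun x => hdt_eq t x
    rw [h3]
    exact h1.comp h2
  have UD : ∀ k : ℕ, k ≤ 4 → ∀ n : ℕ, ∃ C, ∀ t ∈ Set.Icc (0:ℝ) T, ∀ x : Euc d,
      (1+‖x‖)^n * ‖iteratedFDeriv ℝ k (ρ t) x‖ ≤ C := by
    intro k hk n
    obtain ⟨C, hC⟩ := Stmt14Aux.polyconv (ι := {p : ℝ // p ∈ Set.Icc (0:ℝ) T})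
      (fun p x => ‖iteratedFDeriv ℝ k (ρ p.1) x‖)
      (fun n' => by
        obtain ⟨C, hC⟩ := hdecay.1 k hk n'
        exact ⟨C, fun p x => by simpa using hC p.1 p.2 x⟩) n
    exact ⟨C, fun t ht x => by simpa using hC ⟨t, ht⟩ x⟩
  have UDt : ∀ n : ℕ, ∃ C, ∀ t ∈ Set.Icc (0:ℝ) T, ∀ x : Euc d,
      (1+‖x‖)^n * |dt t x| ≤ C := by
    intro n
    obtain ⟨C, hC⟩ := Stmt14Aux.polyconv (ι := {p : ℝ // p ∈ Set.Icc (0:ℝ) T})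
      (fun p x => dt p.1 x)
      (fun n' => by
        obtain ⟨C, hC⟩ := hdecay.2 n'
        exact ⟨C, fun p x => hC p.1 p.2 x⟩) n
    exact ⟨C, fun t ht x => hC ⟨t, ht⟩ x⟩
  have D0 : ∀ t ∈ Set.Icc (0:ℝ) T, Stmt14Aux.Dec (ρ t) := by
    intro t ht n
    obtain ⟨C, hC⟩ := UD 0 (by norm_num) n
    refine ⟨C, fun x => ?_⟩
    have h := hC t ht x
    rwa [norm_iteratedFDeriv_zero, Real.norm_eq_abs] at h
  have D1 : ∀ t ∈ Set.Icc (0:ℝ) T, ∀ i : Fin d, Stmt14Aux.Dec (pd (ρ t) i) := by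
    intro t ht i n
    obtain ⟨C, hC⟩ := UD 1 (by norm_num) n
    refine ⟨C, fun x => ?_⟩
    have h1 := Stmt14Aux.abs_pd_le ((hxs t).differentiable (by simp)) i x
    have h2 := hC t ht x
    have hp : (0:ℝ) ≤ (1+‖x‖)^n := by positivity
    nlinarith [norm_nonneg (iteratedFDeriv ℝ 1 (ρ t) x), abs_nonneg (pd (ρ t) i x)]
  have D2 : ∀ t ∈ Set.Icc (0:ℝ) T, ∀ i j : Fin d, Stmt14Aux.Dec (pd (pd (ρ t) i) j) := by
    intro t ht i j n
    obtain ⟨C, hC⟩ := UD 2 (by norm_num) n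
    refine ⟨C, fun x => ?_⟩
    have h1 := Stmt14Aux.abs_pd_pd_le (hxs t) i j x
    have h2 := hC t ht x
    have hp : (0:ℝ) ≤ (1+‖x‖)^n := by positivity
    nlinarith [norm_nonneg (iteratedFDeriv ℝ 2 (ρ t) x), abs_nonneg (pd (pd (ρ t) i) j x)]
  have Dt : ∀ t ∈ Set.Icc (0:ℝ) T, Stmt14Aux.Dec (fun x => dt t x) := by
    intro t ht n
    obtain ⟨C, hC⟩ := UDt n
    exact ⟨C, fun x => hC t ht x⟩
  -- differentiability shortcuts
  have hdiffx : ∀ (t : ℝ) (x : Euc d), DifferentiableAt ℝ (ρ t) x :=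
    fun t x => (hxs t).differentiable (by simp) x
  have hdiffpd : ∀ (t : ℝ) (i : Fin d) (x : Euc d), DifferentiableAt ℝ (pd (ρ t) i) x :=
    fun t i x => (Stmt14Aux.contDiff_pd (hxs t) i).differentiable (by simp) x
  have hdiffcoord : ∀ (i : Fin d) (c : ℝ) (x : Euc d),
      DifferentiableAt ℝ (fun y : Euc d => y i - c) x :=
    fun i c x => (Stmt14Aux.contDiff_coord_sub i c).differentiable (by simp) x
  have hdiffq : ∀ (c : Euc d) (x : Euc d), DifferentiableAt ℝ (fun y : Euc d => ‖y - c‖^2) x :=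
    fun c x => (Stmt14Aux.contDiff_normsq c).differentiable (by simp) x
  -- divergence formula
  have hdiv : ∀ (t : ℝ) (x : Euc d), divg (fun y => ρ t y • (y - m t)) x
      = (d:ℝ) * ρ t x + ∑ i, pd (ρ t) i x * (x i - m t i) := by
    intro t x
    unfold divg
    have hterm : ∀ i : Fin d, pd (fun y : Euc d => (ρ t y • (y - m t)) i) i x
        = pd (ρ t) i x * (x i - m t i) + ρ t x := by
      intro i
      have hcomp : (fun y : Euc d => (ρ t y • (y - m t)) i)
          = fun y : Euc d => ρ t y * (y i - m t i) := by
        funext y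
        simp [PiLp.smul_apply, smul_eq_mul, PiLp.sub_apply]
      rw [Stmt14Aux.pd_congr hcomp,
        Stmt14Aux.pd_mul (f := ρ t) (g := fun y : Euc d => y i - m t i)
          (hdiffx t x) (hdiffcoord i (m t i) x) i,
        Stmt14Aux.pd_coord_sub i i (m t i) x]
      simp
    rw [Finset.sum_congr rfl (fun i _ => hterm i), Finset.sum_add_distrib, Finset.sum_const]
    simp [Finset.card_univ, nsmul_eq_mul]
    ring
  -- first derivative of the weight function
  have hwfun : ∀ (t : ℝ) (i : Fin d),
      (fun y : Euc d => pd (fun z : Euc d => ‖z - m t‖^2 * ρ t z) i y)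
      = fun y : Euc d => 2 * (y i - m t i) * ρ t y + ‖y - m t‖^2 * pd (ρ t) i y := by
    intro t i
    funext y
    rw [Stmt14Aux.pd_mul (f := fun z : Euc d => ‖z - m t‖^2) (g := ρ t)
      (hdiffq (m t) y) (hdiffx t y) i, Stmt14Aux.pd_normsq (m t) i y]
  -- Laplacian formula
  have hlap : ∀ (t : ℝ) (x : Euc d), lap (fun y : Euc d => ‖y - m t‖^2 * ρ t y) x
      = 2*(d:ℝ)*ρ t x + 4 * (∑ i, pd (ρ t) i x * (x i - m t i))
        + ‖x - m t‖^2 * (∑ i, pd (pd (ρ t) i) i x) := by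
    intro t x
    unfold lap
    have hterm : ∀ i : Fin d, pd (fun y => pd (fun z : Euc d => ‖z - m t‖^2 * ρ t z) i y) i x
        = 2 * ρ t x + 4 * (pd (ρ t) i x * (x i - m t i)) + ‖x - m t‖^2 * pd (pd (ρ t) i) i x := by
      intro i
      rw [Stmt14Aux.pd_congr (hwfun t i)]
      have d1 : DifferentiableAt ℝ (fun y : Euc d => 2 * (y i - m t i) * ρ t y) x :=
        ((hdiffcoord i (m t i) x).const_mul 2).mul (hdiffx t x)
      have d2 : DifferentiableAt ℝ (fun y : Euc d => ‖y - m t‖^2 * pd (ρ t) i y) x :=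
        (hdiffq (m t) x).mul (hdiffpd t i x)
      rw [Stmt14Aux.pd_add (f := fun y : Euc d => 2 * (y i - m t i) * ρ t y)
        (g := fun y : Euc d => ‖y - m t‖^2 * pd (ρ t) i y) d1 d2 i]
      rw [Stmt14Aux.pd_mul (f := fun y : Euc d => 2 * (y i - m t i)) (g := ρ t)
        ((hdiffcoord i (m t i) x).const_mul 2) (hdiffx t x) i]
      rw [Stmt14Aux.pd_mul (f := fun y : Euc d => ‖y - m t‖^2) (g := pd (ρ t) i)
        (hdiffq (m t) x) (hdiffpd t i x) i]
      rw [Stmt14Aux.pd_const_mul (f := fun y : Euc d => y i - m t i)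
        (hdiffcoord i (m t i) x) 2 i]
      rw [Stmt14Aux.pd_coord_sub i i (m t i) x, Stmt14Aux.pd_normsq (m t) i x]
      simp only [if_pos]
      ring
    rw [Finset.sum_congr rfl (fun i _ => hterm i)]
    rw [Finset.sum_add_distrib, Finset.sum_add_distrib, Finset.sum_const, ← Finset.mul_sum,
      ← Finset.mul_sum]
    simp [Finset.card_univ, nsmul_eq_mul]
    ring
  set G1 : ℝ → Fin d → Euc d → ℝ := fun t i y => (y i - m t i) * (ρ t y * ρ t y) with hG1def
  set G2 : ℝ → Fin d → Euc d → ℝ := fun t i y => (‖y - m t‖^2 * ρ t y) * pd (ρ t) i y with hG2def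
  have hG1eq : ∀ (t : ℝ) (i : Fin d),
      G1 t i = fun y : Euc d => (y i - m t i) * (ρ t y * ρ t y) := fun t i => rfl
  have hG2eq : ∀ (t : ℝ) (i : Fin d),
      G2 t i = fun y : Euc d => (‖y - m t‖^2 * ρ t y) * pd (ρ t) i y := fun t i => rfl
  have hG1s : ∀ (t : ℝ) (i : Fin d), ContDiff ℝ (⊤ : ℕ∞) (G1 t i) := by
    intro t i
    rw [hG1eq]
    exact (Stmt14Aux.contDiff_coord_sub i (m t i)).mul ((hxs t).mul (hxs t))
  have hG2s : ∀ (t : ℝ) (i : Fin d), ContDiff ℝ (⊤ : ℕ∞) (G2 t i) := by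
    intro t i
    rw [hG2eq]
    exact ((Stmt14Aux.contDiff_normsq (m t)).mul (hxs t)).mul (Stmt14Aux.contDiff_pd (hxs t) i)
  have hpdG1 : ∀ (t : ℝ) (i : Fin d) (x : Euc d), pd (G1 t i) i x
      = ρ t x * ρ t x
        + (pd (ρ t) i x * ρ t x + ρ t x * pd (ρ t) i x) * (x i - m t i) := by
    intro t i x
    rw [Stmt14Aux.pd_congr (hG1eq t i)]
    rw [Stmt14Aux.pd_mul (f := fun y : Euc d => y i - m t i)
      (g := fun y : Euc d => ρ t y * ρ t y)
      (hdiffcoord i (m t i) x) ((hdiffx t x).mul (hdiffx t x)) i]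
    rw [Stmt14Aux.pd_mul (f := ρ t) (g := ρ t) (hdiffx t x) (hdiffx t x) i]
    rw [Stmt14Aux.pd_coord_sub i i (m t i) x]
    simp only [if_pos]
    ring
  have hpdG2 : ∀ (t : ℝ) (i : Fin d) (x : Euc d), pd (G2 t i) i x
      = (2 * (x i - m t i) * ρ t x + ‖x - m t‖^2 * pd (ρ t) i x) * pd (ρ t) i x
        + (‖x - m t‖^2 * ρ t x) * pd (pd (ρ t) i) i x := by
    intro t i x
    rw [Stmt14Aux.pd_congr (hG2eq t i)]
    rw [Stmt14Aux.pd_mul (f := fun y : Euc d => ‖y - m t‖^2 * ρ t y) (g := pd (ρ t) i)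
      ((hdiffq (m t) x).mul (hdiffx t x)) (hdiffpd t i x) i]
    rw [congrFun (hwfun t i) x]
  have hsum1 : ∀ (t : ℝ) (x : Euc d), ∑ i, pd (G1 t i) i x
      = (d:ℝ) * (ρ t x * ρ t x)
        + 2 * (ρ t x * (∑ i, pd (ρ t) i x * (x i - m t i))) := by
    intro t x
    rw [Finset.sum_congr rfl (fun i _ => hpdG1 t i x)]
    rw [Finset.sum_add_distrib, Finset.sum_const]
    simp only [Finset.card_univ, Fintype.card_fin, nsmul_eq_mul, Finset.mul_sum]
    congr 1
    exact Finset.sum_congr rfl (fun i _ => by ring)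
  have hsum2 : ∀ (t : ℝ) (x : Euc d), ∑ i, pd (G2 t i) i x
      = 2 * (ρ t x * (∑ i, pd (ρ t) i x * (x i - m t i)))
        + ‖x - m t‖^2 * (∑ i, pd (ρ t) i x * pd (ρ t) i x)
        + (‖x - m t‖^2 * ρ t x) * (∑ i, pd (pd (ρ t) i) i x) := by
    intro t x
    rw [Finset.sum_congr rfl (fun i _ => hpdG2 t i x)]
    simp only [Finset.mul_sum]
    rw [← Finset.sum_add_distrib, ← Finset.sum_add_distrib]
    exact Finset.sum_congr rfl (fun i _ => by ring)
  -- decay of the boundary terms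
  have decG1 : ∀ t ∈ Set.Icc (0:ℝ) T, ∀ i : Fin d, Stmt14Aux.Dec (G1 t i) := by
    intro t ht i
    have h1 : Stmt14Aux.Dec (fun x : Euc d => (ρ t x * ρ t x) * (x i - m t i)) :=
      ((D0 t ht).mul_pg (D0 t ht).pg).mul_pg (Stmt14Aux.PG.coord i (m t i))
    exact h1.congr (fun x => by rw [hG1eq]; ring)
  have decpdG1 : ∀ t ∈ Set.Icc (0:ℝ) T, ∀ i : Fin d,
      Stmt14Aux.Dec (fun x => pd (G1 t i) i x) := by
    intro t ht i
    have h1 : Stmt14Aux.Dec (fun x : Euc d => ρ t x * ρ t x) :=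
      (D0 t ht).mul_pg (D0 t ht).pg
    have h2 : Stmt14Aux.Dec (fun x : Euc d =>
        (pd (ρ t) i x * ρ t x + ρ t x * pd (ρ t) i x) * (x i - m t i)) :=
      (((D1 t ht i).mul_pg (D0 t ht).pg).add ((D0 t ht).mul_pg (D1 t ht i).pg)).mul_pg
        (Stmt14Aux.PG.coord i (m t i))
    exact (h1.add h2).congr (fun x => hpdG1 t i x)
  have decG2 : ∀ t ∈ Set.Icc (0:ℝ) T, ∀ i : Fin d, Stmt14Aux.Dec (G2 t i) := by
    intro t ht i
    have h1 : Stmt14Aux.Dec (fun x : Euc d => (ρ t x * pd (ρ t) i x) * ‖x - m t‖^2) :=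
      ((D0 t ht).mul_pg (D1 t ht i).pg).mul_pg (Stmt14Aux.PG.normsq (m t))
    exact h1.congr (fun x => by rw [hG2eq]; ring)
  have decpdG2 : ∀ t ∈ Set.Icc (0:ℝ) T, ∀ i : Fin d,
      Stmt14Aux.Dec (fun x => pd (G2 t i) i x) := by
    intro t ht i
    have hpg : Stmt14Aux.PG (fun x : Euc d =>
        2 * (x i - m t i) * ρ t x + ‖x - m t‖^2 * pd (ρ t) i x) :=
      (((Stmt14Aux.PG.const 2).mul (Stmt14Aux.PG.coord i (m t i))).mul (D0 t ht).pg).add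
        ((Stmt14Aux.PG.normsq (m t)).mul (D1 t ht i).pg)
    have h1 : Stmt14Aux.Dec (fun x : Euc d => pd (ρ t) i x *
        (2 * (x i - m t i) * ρ t x + ‖x - m t‖^2 * pd (ρ t) i x)) :=
      (D1 t ht i).mul_pg hpg
    have h2 : Stmt14Aux.Dec (fun x : Euc d => pd (pd (ρ t) i) i x * (‖x - m t‖^2 * ρ t x)) :=
      (D2 t ht i i).mul_pg ((Stmt14Aux.PG.normsq (m t)).mul (D0 t ht).pg)
    exact (h1.add h2).congr (fun x => by rw [hpdG2 t i x]; ring)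
  have decQN : ∀ t ∈ Set.Icc (0:ℝ) T,
      Stmt14Aux.Dec (fun x => ‖x - m t‖^2 * (∑ i, pd (ρ t) i x * pd (ρ t) i x)) := by
    intro t ht
    have h1 : Stmt14Aux.Dec (fun x : Euc d => ∑ i, pd (ρ t) i x * pd (ρ t) i x) :=
      Stmt14Aux.Dec.finsum Finset.univ _ (fun i _ => (D1 t ht i).mul_pg (D1 t ht i).pg)
    exact (h1.mul_pg (Stmt14Aux.PG.normsq (m t))).congr (fun x => by ring)
  -- continuity of the pieces
  have contpd1 : ∀ (t : ℝ) (i : Fin d), Continuous (fun x => pd (G1 t i) i x) :=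
    fun t i => (Stmt14Aux.contDiff_pd (hG1s t i) i).continuous
  have contpd2 : ∀ (t : ℝ) (i : Fin d), Continuous (fun x => pd (G2 t i) i x) :=
    fun t i => (Stmt14Aux.contDiff_pd (hG2s t i) i).continuous
  have contQN : ∀ (t : ℝ),
      Continuous (fun x => ‖x - m t‖^2 * (∑ i, pd (ρ t) i x * pd (ρ t) i x)) := by
    intro t
    exact (Stmt14Aux.contDiff_normsq (m t)).continuous.mul
      (continuous_finset_sum _ (fun i _ =>
        (Stmt14Aux.contDiff_pd (hxs t) i).continuous.mul
          (Stmt14Aux.contDiff_pd (hxs t) i).continuous))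
  -- integrability
  have intpdG1 : ∀ t ∈ Set.Icc (0:ℝ) T, ∀ i : Fin d, Integrable (fun x => pd (G1 t i) i x) :=
    fun t ht i => (decpdG1 t ht i).integrable (contpd1 t i)
  have intpdG2 : ∀ t ∈ Set.Icc (0:ℝ) T, ∀ i : Fin d, Integrable (fun x => pd (G2 t i) i x) :=
    fun t ht i => (decpdG2 t ht i).integrable (contpd2 t i)
  have intQN : ∀ t ∈ Set.Icc (0:ℝ) T,
      Integrable (fun x => ‖x - m t‖^2 * (∑ i, pd (ρ t) i x * pd (ρ t) i x)) :=
    fun t ht => (decQN t ht).integrable (contQN t)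
  have intRR : ∀ t ∈ Set.Icc (0:ℝ) T, Integrable (fun x => ρ t x * ρ t x) :=
    fun t ht => ((D0 t ht).mul_pg (D0 t ht).pg).integrable ((hxs t).continuous.mul (hxs t).continuous)
  have intSq : ∀ t ∈ Set.Icc (0:ℝ) T, Integrable (fun x => ρ t x ^ 2) := by
    intro t ht
    have h := intRR t ht
    simpa [pow_two] using h
  -- vanishing of boundary integrals
  have hzero1 : ∀ t ∈ Set.Icc (0:ℝ) T, ∫ x, (∑ i, pd (G1 t i) i x) = 0 := by
    intro t ht
    rw [integral_finset_sum Finset.univ (fun i _ => intpdG1 t ht i)]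
    refine Finset.sum_eq_zero (fun i _ => ?_)
    exact Stmt14Aux.integral_pd_eq_zero (G1 t i) (hG1s t i) i
      ((decG1 t ht i).bound (d+1)) ((decpdG1 t ht i).bound (d+1))
  have hzero2 : ∀ t ∈ Set.Icc (0:ℝ) T, ∫ x, (∑ i, pd (G2 t i) i x) = 0 := by
    intro t ht
    rw [integral_finset_sum Finset.univ (fun i _ => intpdG2 t ht i)]
    refine Finset.sum_eq_zero (fun i _ => ?_)
    exact Stmt14Aux.integral_pd_eq_zero (G2 t i) (hG2s t i) i
      ((decG2 t ht i).bound (d+1)) ((decpdG2 t ht i).bound (d+1))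
  -- pointwise identity
  have hpoint : ∀ t ∈ Set.Icc (0:ℝ) T, ∀ x : Euc d,
      2 * ρ t x * dt t x
      = (lam + sig^2) * (∑ i, pd (G1 t i) i x) + sig^2 * (∑ i, pd (G2 t i) i x)
        + ((d:ℝ)*(lam+sig^2)) * (ρ t x * ρ t x)
        - sig^2 * (‖x - m t‖^2 * (∑ i, pd (ρ t) i x * pd (ρ t) i x)) := by
    intro t ht x
    have hp : dt t x = lam * divg (fun y => ρ t y • (y - m t)) x
        + sig ^ 2 / 2 * lap (fun y => ‖y - m t‖ ^ 2 * ρ t y) x := hpde t ht x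
    rw [hdiv t x, hlap t x] at hp
    rw [hsum1 t x, hsum2 t x, hp]
    ring
  -- the integral identity
  have hA : ∀ t ∈ Set.Icc (0:ℝ) T,
      ∫ x, 2 * ρ t x * dt t x
      = ((d:ℝ)*(lam+sig^2)) * (∫ x, ρ t x ^ 2)
        - sig^2 * ∫ x, ‖x - m t‖^2 * (∑ i, pd (ρ t) i x * pd (ρ t) i x) := by
    intro t ht
    have h1 : ∫ x, 2 * ρ t x * dt t x
        = ∫ x, ((lam + sig^2) * (∑ i, pd (G1 t i) i x) + sig^2 * (∑ i, pd (G2 t i) i x)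
            + ((d:ℝ)*(lam+sig^2)) * (ρ t x * ρ t x)
            - sig^2 * (‖x - m t‖^2 * (∑ i, pd (ρ t) i x * pd (ρ t) i x))) :=
      integral_congr_ae (Filter.Eventually.of_forall (fun x => hpoint t ht x))
    have i1 : Integrable (fun x => (lam + sig^2) * (∑ i, pd (G1 t i) i x)) :=
      (integrable_finset_sum Finset.univ (fun i _ => intpdG1 t ht i)).const_mul _
    have i2 : Integrable (fun x => sig^2 * (∑ i, pd (G2 t i) i x)) :=
      (integrable_finset_sum Finset.univ (fun i _ => intpdG2 t ht i)).const_mul _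
    have i3 : Integrable (fun x => ((d:ℝ)*(lam+sig^2)) * (ρ t x * ρ t x)) :=
      (intRR t ht).const_mul _
    have i4 : Integrable (fun x => sig^2 * (‖x - m t‖^2 * (∑ i, pd (ρ t) i x * pd (ρ t) i x))) :=
      (intQN t ht).const_mul _
    have i12 : Integrable (fun x => (lam + sig^2) * (∑ i, pd (G1 t i) i x)
        + sig^2 * (∑ i, pd (G2 t i) i x)) := i1.add i2
    have i123 : Integrable (fun x => (lam + sig^2) * (∑ i, pd (G1 t i) i x)
        + sig^2 * (∑ i, pd (G2 t i) i x)
        + ((d:ℝ)*(lam+sig^2)) * (ρ t x * ρ t x)) := i12.add i3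
    rw [h1, integral_sub i123 i4, integral_add i12 i3,
      integral_add i1 i2, integral_const_mul, integral_const_mul, integral_const_mul,
      integral_const_mul, hzero1 t ht, hzero2 t ht]
    have h2 : ∫ x, ρ t x * ρ t x = ∫ x, ρ t x ^ 2 := by
      apply integral_congr_ae
      exact Filter.Eventually.of_forall (fun x => (pow_two (ρ t x)).symm)
    rw [h2]
    ring
  -- energy
  set E : ℝ → ℝ := fun s => ∫ x, ρ s x ^ 2 with hEdef
  set K : ℝ := (d:ℝ) * (lam + sig^2) with hKdef
  have hEnn : ∀ s : ℝ, 0 ≤ E s := fun s => integral_nonneg (fun x => sq_nonneg _)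
  obtain ⟨C0, hC0⟩ := UD 0 (by norm_num) 0
  have hC0' : ∀ t ∈ Set.Icc (0:ℝ) T, ∀ x : Euc d, |ρ t x| ≤ C0 := by
    intro t ht x
    have h := hC0 t ht x
    rwa [pow_zero, one_mul, norm_iteratedFDeriv_zero, Real.norm_eq_abs] at h
  obtain ⟨C1, hC1⟩ := UD 0 (by norm_num) (d+1)
  have hC1' : ∀ t ∈ Set.Icc (0:ℝ) T, ∀ x : Euc d, (1+‖x‖)^(d+1) * |ρ t x| ≤ C1 := by
    intro t ht x
    have h := hC1 t ht x
    rwa [norm_iteratedFDeriv_zero, Real.norm_eq_abs] at h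
  obtain ⟨Ct, hCt⟩ := UDt (d+1)
  have hC0nn : 0 ≤ C0 := le_trans (abs_nonneg _) (hC0' 0 hd0T 0)
  have hCtnn : 0 ≤ Ct := le_trans (by positivity) (hCt 0 hd0T 0)
  -- derivative of the energy in the interior
  have hE' : ∀ t ∈ Set.Ioo (0:ℝ) T, HasDerivAt E (∫ x, 2 * ρ t x * dt t x) t := by
    intro t ht
    have hε : 0 < min t (T - t) := lt_min ht.1 (by linarith [ht.2])
    have hball : Metric.ball t (min t (T - t)) ⊆ Set.Icc (0:ℝ) T := by
      intro s hs
      rw [Metric.mem_ball, Real.dist_eq] at hs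
      have h1 := abs_lt.mp hs
      have h2 := min_le_left t (T - t)
      have h3 := min_le_right t (T - t)
      exact ⟨by linarith [h1.1], by linarith [h1.2]⟩
    have hmeas : ∀ᶠ s in nhds t, AEStronglyMeasurable (fun x : Euc d => ρ s x ^ 2) volume :=
      Eventually.of_forall (fun s => (((hxs s).continuous).pow 2).aestronglyMeasurable)
    have hFmeas : AEStronglyMeasurable (fun x : Euc d => 2 * ρ t x * dt t x) volume :=
      ((continuous_const.mul (hxs t).continuous).mul (hdtc t)).aestronglyMeasurable
    have hbound : ∀ᵐ x : Euc d ∂volume, ∀ s ∈ Metric.ball t (min t (T - t)),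
        ‖2 * ρ s x * dt s x‖ ≤ 2 * C0 * Ct * ((1+‖x‖)^(d+1))⁻¹ := by
      refine Eventually.of_forall (fun x => fun s hs => ?_)
      have hsI := hball hs
      have h1 := hC0' s hsI x
      have h2 := hCt s hsI x
      have hp : (0:ℝ) < (1+‖x‖)^(d+1) := by positivity
      have h3 : |dt s x| ≤ Ct * ((1+‖x‖)^(d+1))⁻¹ := by
        rw [← div_eq_mul_inv, le_div_iff₀ hp]
        nlinarith [abs_nonneg (dt s x)]
      rw [Real.norm_eq_abs, abs_mul, abs_mul, abs_two]
      have h4 : (0:ℝ) ≤ ((1+‖x‖)^(d+1))⁻¹ := by positivity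
      nlinarith [abs_nonneg (ρ s x), abs_nonneg (dt s x), mul_nonneg hC0nn h4]
    have hbint : Integrable (fun x : Euc d => 2 * C0 * Ct * ((1+‖x‖)^(d+1))⁻¹) :=
      Stmt14Aux.integrable_inv_decay _
    have hdiff2 : ∀ᵐ x : Euc d ∂volume, ∀ s ∈ Metric.ball t (min t (T - t)),
        HasDerivAt (fun u => ρ u x ^ 2) (2 * ρ s x * dt s x) s := by
      refine Eventually.of_forall (fun x => fun s _ => ?_)
      have h := (htderiv s x).pow 2
      have h2 : ((2:ℕ):ℝ) * ρ s x ^ (2-1) * dt s x = 2 * ρ s x * dt s x := by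
        norm_num
      rwa [h2] at h
    obtain ⟨-, hH⟩ := hasDerivAt_integral_of_dominated_loc_of_deriv_le (Metric.ball_mem_nhds t hε) hmeas
      (intSq t (hball (Metric.mem_ball_self hε))) hFmeas hbound hbint hdiff2
    exact hH
  -- continuity of the energy on [0, T]
  have hEc : ContinuousOn E (Set.Icc 0 T) := by
    intro t ht
    have hbound : ∀ᶠ s in nhdsWithin t (Set.Icc (0:ℝ) T), ∀ᵐ x : Euc d ∂volume,
        ‖ρ s x ^ 2‖ ≤ C0 * C1 * ((1+‖x‖)^(d+1))⁻¹ := by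
      filter_upwards [self_mem_nhdsWithin] with s hs
      refine Eventually.of_forall (fun x => ?_)
      have h1 := hC0' s hs x
      have h2 := hC1' s hs x
      have hp : (0:ℝ) < (1+‖x‖)^(d+1) := by positivity
      have h3 : |ρ s x| ≤ C1 * ((1+‖x‖)^(d+1))⁻¹ := by
        rw [← div_eq_mul_inv, le_div_iff₀ hp]
        nlinarith [abs_nonneg (ρ s x)]
      have h4 : ‖ρ s x ^ 2‖ = |ρ s x| * |ρ s x| := by
        rw [Real.norm_eq_abs, pow_two, abs_mul]
      rw [h4]
      have h5 : (0:ℝ) ≤ ((1+‖x‖)^(d+1))⁻¹ := by positivity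
      nlinarith [abs_nonneg (ρ s x), mul_nonneg hC0nn h5]
    exact tendsto_integral_filter_of_dominated_convergence
      (fun x : Euc d => C0 * C1 * ((1+‖x‖)^(d+1))⁻¹)
      (Eventually.of_forall (fun s => (((hxs s).continuous).pow 2).aestronglyMeasurable))
      hbound
      (Stmt14Aux.integrable_inv_decay _)
      (Eventually.of_forall (fun x =>
        ((((hts x).continuous.tendsto t).mono_left nhdsWithin_le_nhds).pow 2)))
  -- differential inequality
  have hDle : ∀ t ∈ Set.Ioo (0:ℝ) T, (∫ x, 2 * ρ t x * dt t x) ≤ K * E t := by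
    intro t ht
    have htI : t ∈ Set.Icc (0:ℝ) T := ⟨ht.1.le, ht.2.le⟩
    rw [hA t htI]
    have hq : 0 ≤ ∫ x, ‖x - m t‖^2 * (∑ i, pd (ρ t) i x * pd (ρ t) i x) :=
      integral_nonneg (fun x => mul_nonneg (by positivity)
        (Finset.sum_nonneg (fun i _ => mul_self_nonneg _)))
    have hq2 : 0 ≤ sig^2 * ∫ x, ‖x - m t‖^2 * (∑ i, pd (ρ t) i x * pd (ρ t) i x) :=
      mul_nonneg (sq_nonneg sig) hq
    linarith
  -- Gronwall via monotonicity
  set g : ℝ → ℝ := fun s => Real.exp (-K * s) * E s with hgdef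
  have hg' : ∀ t ∈ Set.Ioo (0:ℝ) T, HasDerivAt g
      (Real.exp (-K * t) * (-K) * E t
        + Real.exp (-K * t) * (∫ x, 2 * ρ t x * dt t x)) t := by
    intro t ht
    have h2 : HasDerivAt (fun s : ℝ => -K * s) (-K) t := by
      simpa using (hasDerivAt_id t).const_mul (-K)
    have h1 : HasDerivAt (fun s : ℝ => Real.exp (-K * s)) (Real.exp (-K * t) * (-K)) t := h2.exp
    exact h1.mul (hE' t ht)
  have hanti : AntitoneOn g (Set.Icc 0 T) := by
    apply antitoneOn_of_deriv_nonpos (convex_Icc 0 T)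
    · exact ((Real.continuous_exp.comp (continuous_const.mul continuous_id)).continuousOn).mul hEc
    · rw [interior_Icc]
      exact fun t ht => (hg' t ht).differentiableAt.differentiableWithinAt
    · rw [interior_Icc]
      intro t ht
      rw [(hg' t ht).deriv]
      have h1 := hDle t ht
      have h2 := Real.exp_pos (-K * t)
      have h3 := hEnn t
      nlinarith
  have hmain : ∀ t ∈ Set.Icc (0:ℝ) T, E t ≤ Real.exp (K * t) * E 0 := by
    intro t ht
    have h1 := hanti hd0T ht ht.1
    have h2 : g 0 = E 0 := by simp [hgdef]
    have h3 : g t = Real.exp (-K * t) * E t := rfl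
    rw [h2, h3] at h1
    have h5 := mul_le_mul_of_nonneg_left h1 (Real.exp_nonneg (K * t))
    rw [← mul_assoc, ← Real.exp_add] at h5
    have h6 : K * t + -K * t = 0 := by ring
    rwa [h6, Real.exp_zero, one_mul] at h5
  constructor
  · intro t ht
    have h1 := hmain t ht
    have h2 : Real.sqrt (E t) ≤ Real.sqrt (Real.exp (K * t) * E 0) := Real.sqrt_le_sqrt h1
    rw [Real.sqrt_mul (Real.exp_nonneg _), ← Real.exp_half] at h2
    calc Real.sqrt (∫ x, ρ t x ^ 2) ≤ Real.exp (K * t / 2) * Real.sqrt (E 0) := h2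
      _ = Real.exp ((d:ℝ) / 2 * (lam + sig^2) * t) * Real.sqrt (∫ x, ρ 0 x ^ 2) := by
          rw [show K * t / 2 = (d:ℝ) / 2 * (lam + sig^2) * t from by rw [hKdef]; ring]
  · intro h0 t ht x
    have hE0 : E 0 = 0 := by
      have hz : ∀ x : Euc d, ρ 0 x ^ 2 = 0 := fun x => by rw [h0 x]; ring
      simp [hEdef, hz]
    have h1 := hmain t ht
    rw [hE0, mul_zero] at h1
    have h2 : E t = 0 := le_antisymm h1 (hEnn t)
    have h3 : (fun x => ρ t x ^ 2) =ᵐ[volume] (fun _ => (0:ℝ)) :=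
      (integral_eq_zero_iff_of_nonneg (fun x => sq_nonneg _) (intSq t ht)).mp h2
    have h4 : (fun x : Euc d => ρ t x ^ 2) = fun _ => (0:ℝ) :=
      (Continuous.ae_eq_iff_eq volume (((hxs t).continuous).pow 2) continuous_const).mp h3
    have h5 := congrFun h4 x
    exact pow_eq_zero_iff (n := 2) (by norm_num) |>.mp h5



end
end

section
/- Let ρ be a classical solution of the CBO Fokker–Planck equation with f satisfying Assumption (A), and assume additionally that ρ(0,·) is essentially bounded. Then for every t ∈ [0,T], ‖ρ(t,·)‖_{L^∞(ℝ^d)} ≤ e^{d(λ+σ²) t} ‖ρ(0,·)‖_{L^∞(ℝ^d)}. -/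
open MeasureTheory Real Filter
open scoped ENNReal RealInnerProductSpace

noncomputable section

section AuxLemmas
open scoped Topology NNReal

/-- 1D: second derivative at an interior local max of a C^∞ function is ≤ 0. -/
lemma second_deriv_nonpos_of_isLocalMax {g : ℝ → ℝ} (hg : ContDiff ℝ (⊤ : ℕ∞) g)
    (h : IsLocalMax g 0) : deriv (deriv g) 0 ≤ 0 := by
  by_contra hpos
  push_neg at hpos
  have h1 : deriv g 0 = 0 := h.deriv_eq_zero
  have hdg : ContDiff ℝ (⊤ : ℕ∞) (deriv g) := (contDiff_infty_iff_deriv.1 hg).2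
  have hd2 : HasDerivAt (deriv g) (deriv (deriv g) 0) 0 :=
    ((hdg.differentiable (by simp)) 0).hasDerivAt
  have hslope : Tendsto (slope (deriv g) 0) (𝓝[>] 0) (𝓝 (deriv (deriv g) 0)) :=
    (hasDerivAt_iff_tendsto_slope.1 hd2).mono_left
      (nhdsWithin_mono 0 (fun z hz => ne_of_gt hz))
  have hev : ∀ᶠ z in 𝓝[>] (0:ℝ), 0 < slope (deriv g) 0 z :=
    hslope.eventually (eventually_gt_nhds hpos)
  have hev2 : ∀ᶠ z in 𝓝[>] (0:ℝ), 0 < deriv g z := by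
    filter_upwards [hev, self_mem_nhdsWithin] with z hz hz'
    have hs : slope (deriv g) 0 z = deriv g z / z := by
      simp [slope, h1, div_eq_inv_mul]
    rw [hs] at hz
    rcases div_pos_iff.1 hz with ⟨h2, _⟩ | ⟨_, h3⟩
    · exact h2
    · exact absurd (Set.mem_Ioi.1 hz') (not_lt.2 h3.le)
  have hev3 : ∀ᶠ z in 𝓝[>] (0:ℝ), g z ≤ g 0 :=
    nhdsWithin_le_nhds h
  obtain ⟨δ, hδpos, hδ⟩ := mem_nhdsGT_iff_exists_Ioc_subset.1 (hev2.and hev3)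
  have hmono : StrictMonoOn g (Set.Icc 0 δ) := by
    apply strictMonoOn_of_deriv_pos (convex_Icc 0 δ)
      (hg.continuous.continuousOn)
    intro z hz
    rw [interior_Icc] at hz
    exact (hδ ⟨hz.1, hz.2.le⟩).1
  have : g 0 < g δ := hmono ⟨le_rfl, hδpos.le⟩ ⟨hδpos.le, le_rfl⟩ hδpos
  exact absurd (hδ ⟨hδpos, le_rfl⟩).2 (not_le.2 this)

variable {d : ℕ}

lemma line_smooth (x : Euc d) (e : Euc d) :
    ContDiff ℝ (⊤ : ℕ∞) (fun u : ℝ => x + u • e) :=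
  contDiff_const.add (contDiff_id.smul contDiff_const)

lemma line_hasDerivAt (x : Euc d) (e : Euc d) (u : ℝ) :
    HasDerivAt (fun u : ℝ => x + u • e) e u := by
  simpa using ((hasDerivAt_id u).smul_const e).const_add x

lemma pd_contDiff {g : Euc d → ℝ} (hg : ContDiff ℝ (⊤ : ℕ∞) g) (i : Fin d) :
    ContDiff ℝ (⊤ : ℕ∞) (fun y => pd g i y) := by
  have h1 : ContDiff ℝ (⊤ : ℕ∞) (fun y => fderiv ℝ g y) :=
    hg.fderiv_right (by simp)
  exact h1.clm_apply contDiff_const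

lemma pd_pd_nonpos {g : Euc d → ℝ} (hg : ContDiff ℝ (⊤ : ℕ∞) g) {x : Euc d}
    (hmax : ∀ y, g y ≤ g x) (i : Fin d) :
    pd (fun y => pd g i y) i x ≤ 0 := by
  set e : Euc d := EuclideanSpace.single i 1 with he
  set L : ℝ → Euc d := fun u => x + u • e with hL
  have hL0 : L 0 = x := by simp [hL]
  have hg1 : ContDiff ℝ (⊤ : ℕ∞) (g ∘ L) := hg.comp (line_smooth x e)
  have hd1 : ∀ u, HasDerivAt (g ∘ L) (pd g i (L u)) u := by
    intro u
    exact ((hg.differentiable (by simp)) (L u)).hasFDerivAt.comp_hasDerivAt u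
      (line_hasDerivAt x e u)
  have hderiv1 : deriv (g ∘ L) = fun u => pd g i (L u) := by
    funext u; exact (hd1 u).deriv
  have hpdg := pd_contDiff hg i
  have hd2 : HasDerivAt (fun u => pd g i (L u)) (pd (fun y => pd g i y) i x) 0 := by
    have := ((hpdg.differentiable (by simp)) (L 0)).hasFDerivAt.comp_hasDerivAt 0
      (line_hasDerivAt x e 0)
    rw [hL0] at this
    exact this
  have hmax1 : IsLocalMax (g ∘ L) 0 := by
    apply Filter.Eventually.of_forall
    intro u
    calc g (L u) ≤ g x := hmax _
    _ = (g ∘ L) 0 := by simp [Function.comp, hL0]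
  have := second_deriv_nonpos_of_isLocalMax hg1 hmax1
  rwa [hderiv1, hd2.deriv] at this

lemma coord_hasFDerivAt (i : Fin d) (m : Euc d) (x : Euc d) :
    HasFDerivAt (fun y : Euc d => y i - m i) (EuclideanSpace.proj (𝕜 := ℝ) i) x :=
  ((EuclideanSpace.proj (𝕜 := ℝ) i).hasFDerivAt).sub_const (m i)

lemma normsq_hasFDerivAt (m : Euc d) (x : Euc d) :
    HasFDerivAt (fun y : Euc d => ‖y - m‖ ^ 2)
      ((2 : ℕ) • (innerSL ℝ (x - m)).comp (ContinuousLinearMap.id ℝ (Euc d))) x :=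
  ((hasFDerivAt_id x).sub_const m).norm_sq

lemma normsq_fderiv_apply (m : Euc d) (x : Euc d) (i : Fin d) :
    ((2 : ℕ) • (innerSL ℝ (x - m)).comp (ContinuousLinearMap.id ℝ (Euc d)))
      (EuclideanSpace.single i 1) = 2 * (x i - m i) := by
  simp [EuclideanSpace.inner_single_right]

lemma key_ineq {lam sig : ℝ} (hlam : 0 ≤ lam) (hsig : 0 ≤ sig ^ 2)
    {g : Euc d → ℝ} (hg : ContDiff ℝ (⊤ : ℕ∞) g) (m x : Euc d)
    (hmax : ∀ y, g y ≤ g x) (hgx : 0 ≤ g x) :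
    lam * divg (fun y => g y • (y - m)) x + sig ^ 2 / 2 * lap (fun y => ‖y - m‖ ^ 2 * g y) x
      ≤ (d : ℝ) * (lam + sig ^ 2) * g x := by
  have hdiff : Differentiable ℝ g := hg.differentiable (by simp)
  have hmax' : IsLocalMax g x := Filter.Eventually.of_forall hmax
  have hf0 : fderiv ℝ g x = 0 := hmax'.fderiv_eq_zero
  have hpd0 : ∀ j, pd g j x = 0 := by intro j; simp [pd, hf0]
  -- divergence term
  have hdiv : divg (fun y => g y • (y - m)) x = (d : ℝ) * g x := by
    have : ∀ i : Fin d, pd (fun y => g y * (y i - m i)) i x = g x := by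
      intro i
      have h1 : HasFDerivAt (fun y => g y * (y i - m i))
          (g x • (EuclideanSpace.proj (𝕜 := ℝ) i) + (x i - m i) • fderiv ℝ g x) x :=
        (hdiff x).hasFDerivAt.mul (coord_hasFDerivAt i m x)
      rw [pd, h1.fderiv]
      simp [hf0, EuclideanSpace.single_apply]
    calc divg (fun y => g y • (y - m)) x
        = ∑ i : Fin d, pd (fun y => g y * (y i - m i)) i x := rfl
      _ = ∑ _i : Fin d, g x := by exact Finset.sum_congr rfl (fun i _ => this i)
      _ = (d : ℝ) * g x := by simp [mul_comm]
  -- Laplacian term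
  have hpdF : ∀ i : Fin d, (fun y => pd (fun y => ‖y - m‖ ^ 2 * g y) i y)
      = (fun y => 2 * (y i - m i) * g y + ‖y - m‖ ^ 2 * pd g i y) := by
    intro i
    funext y
    have h1 : HasFDerivAt (fun z => ‖z - m‖ ^ 2 * g z)
        ((‖y - m‖ ^ 2) • fderiv ℝ g y
          + g y • ((2 : ℕ) • (innerSL ℝ (y - m)).comp (ContinuousLinearMap.id ℝ (Euc d)))) y :=
      (normsq_hasFDerivAt m y).mul (hdiff y).hasFDerivAt
    rw [pd, h1.fderiv]
    rw [ContinuousLinearMap.add_apply, ContinuousLinearMap.smul_apply,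
      ContinuousLinearMap.smul_apply, normsq_fderiv_apply]
    rw [pd]
    simp only [smul_eq_mul]
    ring
  have hlap : lap (fun y => ‖y - m‖ ^ 2 * g y) x
      = 2 * (d : ℝ) * g x + ‖x - m‖ ^ 2 * ∑ i, pd (fun y => pd g i y) i x := by
    have hterm : ∀ i : Fin d, pd (fun y => pd (fun y => ‖y - m‖ ^ 2 * g y) i y) i x
        = 2 * g x + ‖x - m‖ ^ 2 * pd (fun y => pd g i y) i x := by
      intro i
      rw [hpdF i]
      have hc : HasFDerivAt (fun y : Euc d => 2 * (y i - m i))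
          ((2:ℝ) • (EuclideanSpace.proj (𝕜 := ℝ) i)) x := (coord_hasFDerivAt i m x).const_mul 2
      have h2 : HasFDerivAt (fun y : Euc d => 2 * (y i - m i) * g y)
          ((2 * (x i - m i)) • fderiv ℝ g x + g x • ((2:ℝ) • (EuclideanSpace.proj (𝕜 := ℝ) i))) x :=
        hc.mul (hdiff x).hasFDerivAt
      have hpdgd : Differentiable ℝ (fun y => pd g i y) :=
        (pd_contDiff hg i).differentiable (by simp)
      have h3 : HasFDerivAt (fun y : Euc d => ‖y - m‖ ^ 2 * pd g i y)
          ((‖x - m‖ ^ 2) • fderiv ℝ (fun y => pd g i y) x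
            + pd g i x • ((2 : ℕ) • (innerSL ℝ (x - m)).comp (ContinuousLinearMap.id ℝ (Euc d)))) x :=
        (normsq_hasFDerivAt m x).mul (hpdgd x).hasFDerivAt
      rw [pd, (h2.fun_add h3).fderiv]
      have e1 : (EuclideanSpace.proj (𝕜 := ℝ) i) (EuclideanSpace.single i (1:ℝ)) = 1 := by simp
      simp only [ContinuousLinearMap.add_apply, ContinuousLinearMap.smul_apply,
        normsq_fderiv_apply, hf0, ContinuousLinearMap.zero_apply, hpd0 i, e1,
        smul_eq_mul, zero_smul, zero_mul, mul_zero, mul_one, add_zero, zero_add]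
      rw [pd]
      ring
    calc lap (fun y => ‖y - m‖ ^ 2 * g y) x
        = ∑ i : Fin d, (2 * g x + ‖x - m‖ ^ 2 * pd (fun y => pd g i y) i x) :=
          Finset.sum_congr rfl (fun i _ => hterm i)
      _ = 2 * (d : ℝ) * g x + ‖x - m‖ ^ 2 * ∑ i, pd (fun y => pd g i y) i x := by
          rw [Finset.sum_add_distrib, ← Finset.mul_sum, Finset.sum_const,
            Finset.card_univ, Fintype.card_fin, nsmul_eq_mul]
          rw [← Finset.mul_sum]
          ring
  have hlapneg : ∑ i, pd (fun y => pd g i y) i x ≤ 0 :=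
    Finset.sum_nonpos (fun i _ => pd_pd_nonpos hg hmax i)
  rw [hdiv, hlap]
  have hns : 0 ≤ ‖x - m‖ ^ 2 := sq_nonneg _
  nlinarith [mul_nonpos_of_nonneg_of_nonpos hns hlapneg]


lemma exists_global_max {d : ℕ} {h : Euc d → ℝ} (hc : Continuous h)
    {x0 : Euc d} (h0 : 0 < h x0) {C : ℝ} (hC : 0 < C) (hdec : ∀ x, ‖x‖ * h x ≤ C) :
    ∃ z, ∀ y, h y ≤ h z := by
  set R : ℝ := 2 * C / h x0 + 1 with hR
  have hR0 : 0 < R := by positivity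
  have hx0mem : x0 ∈ Metric.closedBall (0 : Euc d) R := by
    rw [Metric.mem_closedBall, dist_zero_right]
    have h1 : ‖x0‖ * h x0 ≤ C := hdec x0
    have h2 : ‖x0‖ ≤ C / h x0 := (le_div_iff₀ h0).2 h1
    have h3 : C / h x0 ≤ 2 * C / h x0 := by
      gcongr
      linarith
    rw [hR]
    linarith
  obtain ⟨z, hzmem, hzmax⟩ := (isCompact_closedBall (0 : Euc d) R).exists_isMaxOn
    ⟨x0, hx0mem⟩ hc.continuousOn
  refine ⟨z, fun y => ?_⟩
  by_cases hy : y ∈ Metric.closedBall (0 : Euc d) R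
  · exact hzmax hy
  · have hy' : R < ‖y‖ := by
      rw [Metric.mem_closedBall, dist_zero_right, not_le] at hy; exact hy
    have hypos : 0 < ‖y‖ := lt_trans hR0 hy'
    have h1 : h y * ‖y‖ ≤ C := by rw [mul_comm]; exact hdec y
    have h2 : h y ≤ C / ‖y‖ := (le_div_iff₀ hypos).2 h1
    have hkey : h x0 * R = 2 * C + h x0 := by rw [hR]; field_simp
    have h4 : C < h x0 * ‖y‖ := by nlinarith [mul_lt_mul_of_pos_left hy' h0]
    have h5 : C / ‖y‖ < h x0 := (div_lt_iff₀ hypos).2 (by linarith)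
    exact le_trans h2 (le_trans h5.le (hzmax hx0mem))

end AuxLemmas

/-- L^∞ estimate for classical solutions of the CBO Fokker–Planck
equation with essentially bounded initial data. -/
theorem stmt16 (d : ℕ) (hd : 1 ≤ d) (lam sig α T : ℝ)
    (hlam : 0 < lam) (hsig : 0 < sig) (hα : 0 < α) (hT : 0 < T)
    (f : Euc d → ℝ) (Lf s cl cu c0 l : ℝ) (hf : AssumptionA f Lf s cl cu c0 l)
    (ρ : ℝ → Euc d → ℝ) (hρ : IsCBOSolution lam sig α T f ρ)
    (hbdd : eLpNorm (ρ 0) ⊤ volume < ⊤) :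
    ∀ t ∈ Set.Icc (0:ℝ) T,
      eLpNorm (ρ t) ⊤ volume ≤
        ENNReal.ofReal (Real.exp ((d : ℝ) * (lam + sig ^ 2) * t)) * eLpNorm (ρ 0) ⊤ volume := by
  obtain ⟨hjoint, hdecay, hprob, hpde⟩ := hρ
  have hjoint' : ContDiff ℝ (⊤ : ℕ∞) (fun q : ℝ × Euc d => ρ q.1 q.2) :=
    hjoint.of_le (by simp)
  have hslice : ∀ t : ℝ, ContDiff ℝ (⊤ : ℕ∞) (ρ t) := fun t =>
    hjoint'.comp (contDiff_const.prodMk contDiff_id)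
  have htslice : ∀ x : Euc d, ContDiff ℝ (⊤ : ℕ∞) (fun s => ρ s x) := fun x =>
    hjoint'.comp (contDiff_id.prodMk contDiff_const)
  set Dt : ℝ × Euc d → ℝ :=
    fun q => fderiv ℝ (fun q : ℝ × Euc d => ρ q.1 q.2) q (1, 0) with hDtdef
  have hDtc : Continuous Dt :=
    (hjoint'.continuous_fderiv (by simp)).clm_apply continuous_const
  have hderivDt : ∀ (t : ℝ) (x : Euc d), HasDerivAt (fun s => ρ s x) (Dt (t, x)) t := by
    intro t x
    have h1 : HasDerivAt (fun s : ℝ => (s, x)) ((1 : ℝ), (0 : Euc d)) t := by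
      simpa using (hasDerivAt_id t).prodMk (hasDerivAt_const t x)
    exact ((hjoint'.differentiable (by simp)) (t, x)).hasFDerivAt.comp_hasDerivAt t h1
  have hderiv_eq : ∀ (t : ℝ) (x : Euc d), deriv (fun s => ρ s x) t = Dt (t, x) :=
    fun t x => (hderivDt t x).deriv
  -- uniform bounds from polynomial decay
  obtain ⟨C0, hC0⟩ := hdecay.1 0 (by norm_num) 0
  obtain ⟨C1, hC1⟩ := hdecay.1 0 (by norm_num) 1
  obtain ⟨Cd, hCd⟩ := hdecay.2 0
  set C1' : ℝ := max C1 1 with hC1'def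
  have hC1'pos : (0 : ℝ) < C1' := lt_of_lt_of_le one_pos (le_max_right _ _)
  have hCd0 : 0 ≤ Cd := by
    have := hCd 0 ⟨le_rfl, hT.le⟩ 0
    have h2 : (0:ℝ) ≤ ‖(0 : Euc d)‖ ^ 0 * |deriv (fun s => ρ s 0) 0| := by positivity
    linarith
  have hρbd : ∀ t ∈ Set.Icc (0 : ℝ) T, ∀ x, ρ t x ≤ C0 := by
    intro t ht x
    have h1 := hC0 t ht x
    rw [norm_iteratedFDeriv_zero, pow_zero, one_mul, Real.norm_eq_abs] at h1
    exact le_trans (le_abs_self _) h1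
  have hρdecay : ∀ t ∈ Set.Icc (0 : ℝ) T, ∀ x, ‖x‖ * ρ t x ≤ C1' := by
    intro t ht x
    have h1 := hC1 t ht x
    rw [norm_iteratedFDeriv_zero, pow_one, Real.norm_eq_abs] at h1
    calc ‖x‖ * ρ t x ≤ ‖x‖ * |ρ t x| :=
          mul_le_mul_of_nonneg_left (le_abs_self _) (norm_nonneg _)
      _ ≤ C1 := h1
      _ ≤ C1' := le_max_left _ _
  have hDtbd : ∀ t ∈ Set.Icc (0 : ℝ) T, ∀ x, |Dt (t, x)| ≤ Cd := by
    intro t ht x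
    have h1 := hCd t ht x
    rw [pow_zero, one_mul, hderiv_eq] at h1
    exact h1
  -- pointwise Lipschitz in time
  have hlip : ∀ (x : Euc d), ∀ t ∈ Set.Icc (0 : ℝ) T, ∀ s ∈ Set.Icc (0 : ℝ) T,
      |ρ t x - ρ s x| ≤ Cd * |t - s| := by
    intro x t ht s hs
    have hconv : Convex ℝ (Set.Icc (0 : ℝ) T) := convex_Icc _ _
    have := hconv.norm_image_sub_le_of_norm_hasDerivWithin_le
      (f := fun s => ρ s x) (f' := fun u => Dt (u, x)) (C := Cd)
      (fun u _ => (hderivDt u x).hasDerivWithinAt)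
      (fun u hu => by rw [Real.norm_eq_abs]; exact hDtbd u hu x) hs ht
    rwa [Real.norm_eq_abs, Real.norm_eq_abs] at this
  -- the sup function
  set M : ℝ → ℝ := fun t => ⨆ x, ρ t x with hMdef
  have hbddA : ∀ t ∈ Set.Icc (0 : ℝ) T, BddAbove (Set.range (ρ t)) := by
    intro t ht
    exact ⟨C0, by rintro _ ⟨x, rfl⟩; exact hρbd t ht x⟩
  have hMub : ∀ t ∈ Set.Icc (0 : ℝ) T, ∀ x, ρ t x ≤ M t :=
    fun t ht x => le_ciSup (hbddA t ht) x
  have hMle : ∀ t ∈ Set.Icc (0 : ℝ) T, ∀ c : ℝ, (∀ x, ρ t x ≤ c) → M t ≤ c :=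
    fun t ht c hc => ciSup_le hc
  have hposex : ∀ t ∈ Set.Icc (0 : ℝ) T, ∃ x0, 0 < ρ t x0 := by
    intro t ht
    by_contra hcon
    push_neg at hcon
    have hzero : ∀ x, ρ t x = 0 := fun x => le_antisymm (hcon x) ((hprob t ht).1 x)
    have h1 := (hprob t ht).2.2
    simp only [hzero, integral_zero] at h1
    norm_num at h1
  have hMpos : ∀ t ∈ Set.Icc (0 : ℝ) T, 0 < M t := by
    intro t ht
    obtain ⟨x0, hx0⟩ := hposex t ht
    exact lt_of_lt_of_le hx0 (hMub t ht x0)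
  have hmaxex : ∀ t ∈ Set.Icc (0 : ℝ) T, ∃ z, (∀ y, ρ t y ≤ ρ t z) ∧ ρ t z = M t := by
    intro t ht
    obtain ⟨x0, hx0⟩ := hposex t ht
    obtain ⟨z, hz⟩ := exists_global_max (hslice t).continuous hx0 hC1'pos (hρdecay t ht)
    exact ⟨z, hz, le_antisymm (hMub t ht z) (hMle t ht _ hz)⟩
  -- M is Lipschitz on [0,T]
  have hMlip : ∀ t ∈ Set.Icc (0 : ℝ) T, ∀ s ∈ Set.Icc (0 : ℝ) T,
      M t - M s ≤ Cd * |t - s| := by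
    intro t ht s hs
    have h1 : ∀ x, ρ t x ≤ M s + Cd * |t - s| := by
      intro x
      have h2 := hlip x t ht s hs
      have h3 := hMub s hs x
      have := le_abs_self (ρ t x - ρ s x)
      linarith
    linarith [hMle t ht _ h1]
  have hMdist : ∀ t ∈ Set.Icc (0 : ℝ) T, ∀ s ∈ Set.Icc (0 : ℝ) T,
      |M t - M s| ≤ Cd * |t - s| := by
    intro t ht s hs
    rw [abs_sub_le_iff]
    constructor
    · exact hMlip t ht s hs
    · rw [abs_sub_comm]; exact hMlip s hs t ht
  have hMcont : ContinuousOn M (Set.Icc 0 T) := by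
    apply LipschitzOnWith.continuousOn (K := Real.toNNReal Cd)
    apply LipschitzOnWith.of_dist_le_mul
    intro x hx y hy
    rw [Real.dist_eq, Real.dist_eq, Real.coe_toNNReal _ hCd0]
    exact hMdist x hx y hy
  -- key differential inequality at maximizers
  have hkey : ∀ t ∈ Set.Icc (0 : ℝ) T, ∀ z : Euc d, (∀ y, ρ t y ≤ ρ t z) →
      Dt (t, z) ≤ (d : ℝ) * (lam + sig ^ 2) * ρ t z := by
    intro t ht z hz
    rw [← hderiv_eq, hpde t ht z]
    exact key_ineq hlam.le (sq_nonneg sig) (hslice t) (mDensity α f (ρ t)) z hz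
      ((hprob t ht).1 z)
  -- Gronwall
  have hgron : ∀ t ∈ Set.Icc (0 : ℝ) T,
      M t ≤ M 0 * Real.exp ((d : ℝ) * (lam + sig ^ 2) * t) := by
    have hdini : ∀ t ∈ Set.Ico (0 : ℝ) T, ∀ r : ℝ,
        (fun s => (d : ℝ) * (lam + sig ^ 2) * M s) t < r →
        ∃ᶠ z in nhdsWithin t (Set.Ioi t), (z - t)⁻¹ * (M z - M t) < r := by
      intro t ht r hr
      by_contra hcon
      rw [Filter.not_frequently] at hcon
      obtain ⟨u, hu, hIoc⟩ := mem_nhdsGT_iff_exists_Ioc_subset.1 hcon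
      have htT : t < T := ht.2
      have ht0 : 0 ≤ t := ht.1
      have htmem : t ∈ Set.Icc (0 : ℝ) T := ⟨ht0, htT.le⟩
      have hMt := hMpos t htmem
      set b' : ℝ := min u T with hb'def
      have htb' : t < b' := lt_min hu htT
      set δ' : ℝ := min (b' - t) (M t / (2 * (Cd + 1))) with hδ'def
      have hδ'pos : 0 < δ' := lt_min (by linarith) (by positivity)
      have hδ'le1 : δ' ≤ b' - t := min_le_left _ _
      have hδ'le2 : δ' ≤ M t / (2 * (Cd + 1)) := min_le_right _ _
      set z : ℕ → ℝ := fun n => t + δ' / (n + 1) with hzdef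
      have hzsub : ∀ n : ℕ, z n - t = δ' / (n + 1) := by intro n; rw [hzdef]; ring
      have hzgt : ∀ n : ℕ, t < z n := by
        intro n
        have : (0 : ℝ) < δ' / (n + 1) := by positivity
        rw [hzdef]; dsimp only; linarith
      have hzleδ : ∀ n : ℕ, z n - t ≤ δ' := by
        intro n
        rw [hzsub]
        apply div_le_self hδ'pos.le
        have : (0:ℝ) ≤ (n : ℝ) := Nat.cast_nonneg n
        linarith
      have hz_mem : ∀ n : ℕ, z n ∈ Set.Ioc t u := by
        intro n
        refine ⟨hzgt n, ?_⟩
        have h1 : b' ≤ u := min_le_left _ _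
        have := hzleδ n
        linarith
      have hz_Icc : ∀ n : ℕ, z n ∈ Set.Icc (0 : ℝ) T := by
        intro n
        refine ⟨le_trans ht0 (hzgt n).le, ?_⟩
        have h1 : b' ≤ T := min_le_right _ _
        have := hzleδ n
        linarith
      have hMzlow : ∀ n : ℕ, M t / 2 ≤ M (z n) := by
        intro n
        have h1 : M t - M (z n) ≤ Cd * |t - z n| := hMlip t htmem (z n) (hz_Icc n)
        have h2 : |t - z n| = z n - t := by
          rw [abs_sub_comm, abs_of_pos (by linarith [hzgt n])]
        rw [h2] at h1
        have h3 : Cd * (z n - t) ≤ Cd * δ' := by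
          apply mul_le_mul_of_nonneg_left (hzleδ n) hCd0
        have h4 : Cd * δ' ≤ M t / 2 := by
          have h5 : Cd * δ' ≤ Cd * (M t / (2 * (Cd + 1))) :=
            mul_le_mul_of_nonneg_left hδ'le2 hCd0
          have h6 : Cd * (M t / (2 * (Cd + 1))) ≤ M t / 2 := by
            have e : M t / (2 * (Cd + 1)) * (2 * (Cd + 1)) = M t :=
              div_mul_cancel₀ _ (by positivity)
            have hq0 : 0 ≤ M t / (2 * (Cd + 1)) := by positivity
            nlinarith [e, hq0, hCd0]
          linarith
        linarith
      have hch : ∀ n : ℕ, ∃ w, (∀ y, ρ (z n) y ≤ ρ (z n) w) ∧ ρ (z n) w = M (z n) :=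
        fun n => hmaxex (z n) (hz_Icc n)
      choose w hw hwM using hch
      have hwball : ∀ n, w n ∈ Metric.closedBall (0 : Euc d) (2 * C1' / M t) := by
        intro n
        rw [Metric.mem_closedBall, dist_zero_right]
        have h1 : ‖w n‖ * ρ (z n) (w n) ≤ C1' := hρdecay (z n) (hz_Icc n) (w n)
        rw [hwM n] at h1
        have h3 := hMzlow n
        rw [le_div_iff₀ hMt]
        nlinarith [norm_nonneg (w n), mul_le_mul_of_nonneg_left h3 (norm_nonneg (w n)), h1]
      have hmvt : ∀ n : ℕ, ∃ τ ∈ Set.Ioo t (z n),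
          Dt (τ, w n) = (ρ (z n) (w n) - ρ t (w n)) / (z n - t) := by
        intro n
        exact exists_hasDerivAt_eq_slope (fun s => ρ s (w n)) (fun u => Dt (u, w n))
          (hzgt n) (htslice (w n)).continuous.continuousOn
          (fun u _ => hderivDt u (w n))
      choose τ hτmem hτeq using hmvt
      have hrle : ∀ n : ℕ, r ≤ Dt (τ n, w n) := by
        intro n
        have h1 : ¬ ((z n - t)⁻¹ * (M (z n) - M t) < r) := hIoc (hz_mem n)
        push_neg at h1
        have hpos : 0 < z n - t := by linarith [hzgt n]
        have h2 : M (z n) - M t ≤ ρ (z n) (w n) - ρ t (w n) := by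
          have h3 := hMub t htmem (w n)
          have h4 := hwM n
          linarith
        rw [hτeq n]
        calc r ≤ (z n - t)⁻¹ * (M (z n) - M t) := h1
          _ ≤ (z n - t)⁻¹ * (ρ (z n) (w n) - ρ t (w n)) :=
              mul_le_mul_of_nonneg_left h2 (inv_nonneg.2 hpos.le)
          _ = (ρ (z n) (w n) - ρ t (w n)) / (z n - t) := (div_eq_inv_mul _ _).symm
      have hzt : Filter.Tendsto z Filter.atTop (nhds t) := by
        have h1 : Filter.Tendsto (fun n : ℕ => δ' / (n + 1)) Filter.atTop (nhds 0) := by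
          have := tendsto_one_div_add_atTop_nhds_zero_nat.const_mul δ'
          simpa [mul_one_div, div_eq_mul_inv] using this
        have := Filter.Tendsto.const_add t h1
        simpa [hzdef] using this
      have hτt : Filter.Tendsto τ Filter.atTop (nhds t) := by
        apply tendsto_of_tendsto_of_tendsto_of_le_of_le tendsto_const_nhds hzt
        · exact fun n => (hτmem n).1.le
        · exact fun n => (hτmem n).2.le
      obtain ⟨xb, hxbmem, φ, hφmono, hφtend⟩ :=
        (isCompact_closedBall (0 : Euc d) (2 * C1' / M t)).tendsto_subseq hwball
      have hMz : Filter.Tendsto (fun n => M (z n)) Filter.atTop (nhds (M t)) := by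
        have h1 : ∀ n, ‖M (z n) - M t‖ ≤ Cd * (z n - t) := by
          intro n
          rw [Real.norm_eq_abs]
          have h0 := hMdist (z n) (hz_Icc n) t htmem
          rwa [abs_of_pos (show (0:ℝ) < z n - t by linarith [hzgt n])] at h0
        have h2 : Filter.Tendsto (fun n => Cd * (z n - t)) Filter.atTop (nhds 0) := by
          have := (hzt.sub (tendsto_const_nhds (x := t))).const_mul Cd
          simpa using this
        have h3 : Filter.Tendsto (fun n => M (z n) - M t) Filter.atTop (nhds 0) :=
          squeeze_zero_norm h1 h2
        have := h3.add (tendsto_const_nhds (x := M t))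
        simpa using this
      have hρlim : Filter.Tendsto (fun k => ρ (z (φ k)) (w (φ k))) Filter.atTop
          (nhds (ρ t xb)) := by
        have h1 : Filter.Tendsto (fun k => (z (φ k), w (φ k))) Filter.atTop
            (nhds (t, xb)) :=
          (hzt.comp hφmono.tendsto_atTop).prodMk_nhds hφtend
        exact (hjoint'.continuous.tendsto (t, xb)).comp h1
      have hxbmax : ρ t xb = M t := by
        have h2 : Filter.Tendsto (fun k => M (z (φ k))) Filter.atTop (nhds (M t)) :=
          hMz.comp hφmono.tendsto_atTop
        have h3 : (fun k => ρ (z (φ k)) (w (φ k))) = fun k => M (z (φ k)) :=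
          funext fun k => hwM _
        rw [h3] at hρlim
        exact tendsto_nhds_unique hρlim h2
      have hrfinal : r ≤ Dt (t, xb) := by
        have h1 : Filter.Tendsto (fun k => Dt (τ (φ k), w (φ k))) Filter.atTop
            (nhds (Dt (t, xb))) := by
          have h2 : Filter.Tendsto (fun k => (τ (φ k), w (φ k))) Filter.atTop
              (nhds (t, xb)) :=
            ((hτt.comp hφmono.tendsto_atTop).prodMk_nhds hφtend)
          exact (hDtc.tendsto (t, xb)).comp h2
        exact ge_of_tendsto h1 (Filter.Eventually.of_forall fun k => hrle (φ k))
      have hfin : Dt (t, xb) ≤ (d : ℝ) * (lam + sig ^ 2) * M t := by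
        have hmax : ∀ y, ρ t y ≤ ρ t xb := fun y => (hMub t htmem y).trans_eq hxbmax.symm
        have := hkey t htmem xb hmax
        rwa [hxbmax] at this
      simp only at hr
      linarith
    have hmain := le_gronwallBound_of_liminf_deriv_right_le (f := M)
      (f' := fun s => (d : ℝ) * (lam + sig ^ 2) * M s) (δ := M 0)
      (K := (d : ℝ) * (lam + sig ^ 2)) (ε := 0) (a := 0) (b := T)
      hMcont hdini le_rfl (fun x _ => by simp)
    intro t ht
    have := hmain t ht
    rwa [gronwallBound_ε0, sub_zero] at this
  -- conclusion
  intro t ht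
  have h0Icc : (0 : ℝ) ∈ Set.Icc (0 : ℝ) T := ⟨le_rfl, hT.le⟩
  have hup : eLpNorm (ρ t) ⊤ volume ≤ ENNReal.ofReal (M t) := by
    rw [eLpNorm_exponent_top]
    apply eLpNormEssSup_le_of_ae_bound (C := M t)
    apply Filter.Eventually.of_forall
    intro x
    rw [Real.norm_eq_abs, abs_of_nonneg ((hprob t ht).1 x)]
    exact hMub t ht x
  have hlow : ENNReal.ofReal (M 0) ≤ eLpNorm (ρ 0) ⊤ volume := by
    rw [eLpNorm_exponent_top]
    by_contra hcon
    push_neg at hcon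
    have hbtop : eLpNormEssSup (ρ 0) volume ≠ ⊤ := hcon.ne_top
    have hb' : (eLpNormEssSup (ρ 0) volume).toReal < M 0 :=
      ENNReal.toReal_lt_of_lt_ofReal hcon
    obtain ⟨z0, hz0, hz0M⟩ := hmaxex 0 h0Icc
    set U := {x : Euc d | (eLpNormEssSup (ρ 0) volume).toReal < ρ 0 x} with hUdef
    have hUopen : IsOpen U := isOpen_lt continuous_const (hslice 0).continuous
    have hUne : U.Nonempty := ⟨z0, by rw [hUdef]; simp only [Set.mem_setOf_eq, hz0M]; exact hb'⟩
    have hposU := hUopen.measure_pos volume hUne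
    have hnull : volume U = 0 := by
      have hae := ae_le_eLpNormEssSup (f := ρ 0) (μ := volume)
      rw [Filter.eventually_iff, mem_ae_iff] at hae
      apply measure_mono_null _ hae
      intro x hx
      simp only [hUdef, Set.mem_setOf_eq] at hx
      simp only [Set.mem_compl_iff, Set.mem_setOf_eq]
      intro hle
      have h1 : ((‖ρ 0 x‖₊ : ℝ≥0∞)).toReal ≤ (eLpNormEssSup (ρ 0) volume).toReal :=
        ENNReal.toReal_mono hbtop hle
      rw [ENNReal.coe_toReal, coe_nnnorm, Real.norm_eq_abs] at h1
      have := le_trans (le_abs_self (ρ 0 x)) h1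
      linarith
    exact absurd hnull hposU.ne'
  have hgt := hgron t ht
  calc eLpNorm (ρ t) ⊤ volume ≤ ENNReal.ofReal (M t) := hup
    _ ≤ ENNReal.ofReal (Real.exp ((d : ℝ) * (lam + sig ^ 2) * t) * M 0) := by
        apply ENNReal.ofReal_le_ofReal
        rw [mul_comm]
        exact hgt
    _ = ENNReal.ofReal (Real.exp ((d : ℝ) * (lam + sig ^ 2) * t)) * ENNReal.ofReal (M 0) :=
        ENNReal.ofReal_mul (Real.exp_nonneg _)
    _ ≤ ENNReal.ofReal (Real.exp ((d : ℝ) * (lam + sig ^ 2) * t)) * eLpNorm (ρ 0) ⊤ volume :=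
        mul_le_mul_right hlow _
end
end
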